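/- arXiv:1506.03742 — 7 statements merged into one kernel-verified Lean document; each statement's English description precedes it below -/
import Mathlib

section
/- Let W be a subspace of V × V that is totally B-isotropic and has dim_K W = N. Then dim_K (W ∩ (V × 0)) = dim_K (W ∩ (0 × V)). -/
/-!
Projecting `W` to the first factor gives `dim π₁(W) + dim (W ∩ (0 × V)) = N`. If `(v, 0) ∈ W`,
isotropy says that `b v` vanishes on `π₁(W)`; since `b : V → V^*` is injective, `W ∩ (V × 0)`
embeds into the annihilator of `π₁(W)`, of dimension `N - dim π₁(W)`. Hence
`dim (W ∩ (V × 0)) ≤ dim (W ∩ (0 × V))`, and exchanging the two factors gives the reverse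
inequality.
-/

open Module LinearMap

theorem Submodule.finrank_ker_comp_subtype {R M M₂ : Type*} [Ring R] [AddCommGroup M]
    [Module R M] [AddCommGroup M₂] [Module R M₂] (W : Submodule R M) (f : M →ₗ[R] M₂) :
    finrank R (ker (f ∘ₗ W.subtype)) = finrank R ↥(W ⊓ ker f) := by
  rw [ker_comp, ← Submodule.map_comap_subtype, Submodule.finrank_map_subtype_eq]

theorem finrank_ker_le_finrank_ker_of_pullback_eq
    {K W M₁ M₂ : Type*} [Field K] [AddCommGroup W] [Module K W] [FiniteDimensional K W]
    [AddCommGroup M₁] [Module K M₁] [FiniteDimensional K M₁] [AddCommGroup M₂] [Module K M₂]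
    {b₁ : M₁ →ₗ[K] M₁ →ₗ[K] K} {b₂ : M₂ →ₗ[K] M₂ →ₗ[K] K} (hb₁ : b₁.SeparatingLeft)
    {p : W →ₗ[K] M₁} {q : W →ₗ[K] M₂} (hpq : ker p ⊓ ker q = ⊥)
    (hb : ∀ w w', b₁ (p w) (p w') = b₂ (q w) (q w')) (hW : finrank K W = finrank K M₁) :
    finrank K (ker q) ≤ finrank K (ker p) := by
  let φ : ker q →ₗ[K] (range p).dualAnnihilator :=
    ((b₁ ∘ₗ p) ∘ₗ (ker q).subtype).codRestrict _ fun w ↦ by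
      rw [Submodule.mem_dualAnnihilator]
      rintro _ ⟨w', rfl⟩
      simp [hb]
  have hφ : Function.Injective φ := by
    refine (injective_iff_map_eq_zero φ).mpr fun w hw ↦ ?_
    have hpw : p w = 0 := hb₁ _ fun v ↦ congrArg (· v) (congrArg Subtype.val hw)
    have hw₀ : (w : W) ∈ ker p ⊓ ker q := ⟨hpw, w.2⟩
    rw [hpq, Submodule.mem_bot] at hw₀
    exact Subtype.ext hw₀
  have h_annihilator := Subspace.finrank_add_finrank_dualAnnihilator_eq (range p)
  have h_rank_nullity := finrank_range_add_finrank_ker p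
  have h_embedding := finrank_le_finrank_of_injective hφ
  omega

theorem isotropic_dim_inter_fst_eq_dim_inter_snd_general
    (K : Type*) [Field K] (V : Type*) [AddCommGroup V] [Module K V]
    [FiniteDimensional K V] (N : ℕ) (hV : finrank K V = N)
    (b : V →ₗ[K] V →ₗ[K] K)
    (hb_nondeg : ∀ v : V, (∀ w : V, b v w = 0) → v = 0)
    (W : Submodule K (V × V))
    (hW_iso : ∀ w ∈ W, ∀ w' ∈ W, b w.1 w'.1 - b w.2 w'.2 = 0)
    (hW_dim : finrank K W = N) :
    finrank K ↥(W ⊓ Submodule.fst K V V) = finrank K ↥(W ⊓ Submodule.snd K V V) := by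
  let p := LinearMap.fst K V V ∘ₗ W.subtype
  let q := LinearMap.snd K V V ∘ₗ W.subtype
  have hpq : ker p ⊓ ker q = ⊥ :=
    eq_bot_iff.mpr fun w ⟨h₁, h₂⟩ ↦ (Submodule.mem_bot K).mpr (Subtype.ext (Prod.ext h₁ h₂))
  have hb w w' : b (p w) (p w') = b (q w) (q w') := sub_eq_zero.mp (hW_iso w w.2 w' w'.2)
  have hdim : finrank K W = finrank K V := hW_dim.trans hV.symm
  have h_fst : finrank K (ker q) = finrank K ↥(W ⊓ Submodule.fst K V V) :=
    W.finrank_ker_comp_subtype _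
  have h_snd : finrank K (ker p) = finrank K ↥(W ⊓ Submodule.snd K V V) :=
    W.finrank_ker_comp_subtype _
  rw [← h_fst, ← h_snd]
  exact le_antisymm (finrank_ker_le_finrank_ker_of_pullback_eq hb_nondeg hpq hb hdim)
    (finrank_ker_le_finrank_ker_of_pullback_eq hb_nondeg (inf_comm (ker p) _ ▸ hpq)
      (fun w w' ↦ (hb w w').symm) hdim)

/-- Let `K` be a field, `V` a finite-dimensional `K`-vector space with
`dim_K V = N`, and `b` a nondegenerate reflexive bilinear form on `V`.  Let `B` be the
bilinear form on `V × V` given by `B((v₁,v₂),(w₁,w₂)) = b v₁ w₁ - b v₂ w₂`.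
If `W` is a totally `B`-isotropic subspace of `V × V` with `dim_K W = N`, then
`dim_K (W ∩ (V × 0)) = dim_K (W ∩ (0 × V))`. -/
theorem isotropic_dim_inter_fst_eq_dim_inter_snd
    (K : Type*) [Field K] (V : Type*) [AddCommGroup V] [Module K V]
    [FiniteDimensional K V] (N : ℕ) (hV : finrank K V = N)
    (b : V →ₗ[K] V →ₗ[K] K)
    (hb_nondeg : ∀ v : V, (∀ w : V, b v w = 0) → v = 0)
    (hb_refl : ∀ v w : V, b v w = 0 ↔ b w v = 0)
    (W : Submodule K (V × V))
    (hW_iso : ∀ w ∈ W, ∀ w' ∈ W, b w.1 w'.1 - b w.2 w'.2 = 0)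
    (hW_dim : finrank K W = N) :
    finrank K ↥(W ⊓ Submodule.fst K V V) = finrank K ↥(W ⊓ Submodule.snd K V V) :=
  isotropic_dim_inter_fst_eq_dim_inter_snd_general K V N hV b hb_nondeg W hW_iso hW_dim
end

section
/- Let W be a complex subspace of V × V that is totally H-isotropic and has dim_ℂ W = N. Then dim_ℂ (W ∩ (V × 0)) = dim_ℂ (W ∩ (0 × V)). -/
open Module

/-- Rank–nullity for a mapped submodule. -/
lemma aux_finrank_map_add_inf_ker {M M₂ : Type*} [AddCommGroup M] [Module ℂ M]
    [AddCommGroup M₂] [Module ℂ M₂] [FiniteDimensional ℂ M]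
    (p : Submodule ℂ M) (f : M →ₗ[ℂ] M₂) :
    finrank ℂ (p.map f) + finrank ℂ ↥(p ⊓ LinearMap.ker f) = finrank ℂ p := by
  have h1 := LinearMap.finrank_range_add_finrank_ker (f.domRestrict p)
  rw [LinearMap.range_domRestrict, LinearMap.ker_domRestrict] at h1
  rw [← h1]
  congr 1
  have h2 : (LinearMap.ker f).comap p.subtype = (p ⊓ LinearMap.ker f).comap p.subtype := by
    rw [Submodule.comap_inf, Submodule.comap_subtype_self, top_inf_eq]
  rw [h2]
  exact ((Submodule.comapSubtypeEquivOfLe inf_le_left).finrank_eq).symm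

/-- Orthogonal subspaces for a nondegenerate real bilinear form have complementary dims. -/
lemma aux_orth_finrank_le {V : Type*} [AddCommGroup V] [Module ℝ V] [FiniteDimensional ℝ V]
    (B : V →ₗ[ℝ] V →ₗ[ℝ] ℝ) (hnd : Function.Injective B.flip)
    (U U' : Submodule ℝ V) (horth : ∀ u ∈ U, ∀ u' ∈ U', B u u' = 0) :
    finrank ℝ U + finrank ℝ U' ≤ finrank ℝ V := by
  set Φ : V →ₗ[ℝ] Module.Dual ℝ U := U.subtype.dualMap.comp B.flip with hΦ
  have hflip : Function.Surjective B.flip := by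
    rw [← LinearMap.injective_iff_surjective_of_finrank_eq_finrank
      (Subspace.dual_finrank_eq).symm]
    exact hnd
  have hsurj : Function.Surjective Φ :=
    (LinearMap.dualMap_surjective_of_injective U.injective_subtype).comp hflip
  have hker : U' ≤ LinearMap.ker Φ := by
    intro x hx
    rw [LinearMap.mem_ker]
    ext u
    exact horth u u.2 x hx
  have h1 := LinearMap.finrank_range_add_finrank_ker Φ
  rw [LinearMap.range_eq_top.2 hsurj] at h1
  have h2 : finrank ℝ (⊤ : Submodule ℝ (Module.Dual ℝ U)) = finrank ℝ U := by
    rw [finrank_top, Subspace.dual_finrank_eq]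
  have h3 : finrank ℝ U' ≤ finrank ℝ (LinearMap.ker Φ) := Submodule.finrank_mono hker
  omega

lemma aux_finrank_real_eq {V : Type*} [AddCommGroup V] [Module ℂ V] [FiniteDimensional ℂ V]
    (U : Submodule ℂ V) : finrank ℝ (U.restrictScalars ℝ) = 2 * finrank ℂ U := by
  have e := (Submodule.restrictScalarsEquiv ℝ ℂ V U).restrictScalars ℝ
  rw [e.finrank_eq, ← Complex.finrank_real_complex, Module.finrank_mul_finrank ℝ ℂ U]

/-- Orthogonal subspaces for a nondegenerate Hermitian form have complementary dims. -/
lemma aux_orth_finrank_le_complex {V : Type*} [AddCommGroup V] [Module ℂ V]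
    [FiniteDimensional ℂ V]
    (h : V → V → ℂ)
    (h_add₁ : ∀ v v' w : V, h (v + v') w = h v w + h v' w)
    (h_add₂ : ∀ v w w' : V, h v (w + w') = h v w + h v w')
    (h_smul₁ : ∀ (c : ℂ) (v w : V), h (c • v) w = (starRingEnd ℂ) c * h v w)
    (h_smul₂ : ∀ (c : ℂ) (v w : V), h v (c • w) = c * h v w)
    (h_herm : ∀ v w : V, h w v = (starRingEnd ℂ) (h v w))
    (h_nondeg : ∀ v : V, (∀ w : V, h v w = 0) → v = 0)
    (U U' : Submodule ℂ V) (horth : ∀ u ∈ U, ∀ u' ∈ U', h u u' = 0) :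
    finrank ℂ U + finrank ℂ U' ≤ finrank ℂ V := by
  have hsmulR₁ : ∀ (r : ℝ) (v w : V), h (r • v) w = r * h v w := by
    intro r v w
    rw [← Complex.coe_smul, h_smul₁]
    norm_num
  have hsmulR₂ : ∀ (r : ℝ) (v w : V), h v (r • w) = r * h v w := by
    intro r v w
    rw [← Complex.coe_smul, h_smul₂]
  set B : V →ₗ[ℝ] V →ₗ[ℝ] ℝ := LinearMap.mk₂ ℝ (fun v w => (h v w).re)
    (fun v v' w => by show (h (v + v') w).re = (h v w).re + (h v' w).re; rw [h_add₁]; exact Complex.add_re _ _)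
    (fun r v w => by show (h (r • v) w).re = r • (h v w).re; rw [hsmulR₁]; simp)
    (fun v w w' => by show (h v (w + w')).re = (h v w).re + (h v w').re; rw [h_add₂]; exact Complex.add_re _ _)
    (fun r v w => by show (h v (r • w)).re = r • (h v w).re; rw [hsmulR₂]; simp) with hB
  have hBapp : ∀ v w : V, B v w = (h v w).re := fun v w => rfl
  have hnd : Function.Injective B.flip := by
    rw [← LinearMap.ker_eq_bot, Submodule.eq_bot_iff]
    intro v hv
    rw [LinearMap.mem_ker] at hv
    have hre : ∀ w : V, (h w v).re = 0 := by
      intro w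
      have := DFunLike.congr_fun hv w
      simpa [hBapp] using this
    have hzero : ∀ w : V, h w v = 0 := by
      intro w
      have h1 : (h w v).re = 0 := hre w
      have h2 : (h w v).im = 0 := by
        have := hre (Complex.I • w)
        rw [h_smul₁] at this
        simpa using this
      exact Complex.ext h1 h2
    apply h_nondeg
    intro w
    rw [h_herm w v, hzero w]
    simp
  have key := aux_orth_finrank_le B hnd (U.restrictScalars ℝ) (U'.restrictScalars ℝ) ?_
  · rw [aux_finrank_real_eq, aux_finrank_real_eq] at key
    have hV : finrank ℝ V = 2 * finrank ℂ V := by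
      rw [← Complex.finrank_real_complex, Module.finrank_mul_finrank ℝ ℂ V]
    omega
  · intro u hu u' hu'
    rw [Submodule.restrictScalars_mem] at hu hu'
    rw [hBapp, horth u hu u' hu']
    simp

/-- Let `V` be a finite-dimensional complex vector space with
`dim_ℂ V = N`, and `h` a nondegenerate Hermitian sesquilinear form on `V`
(conjugate-linear in the first variable, linear in the second).  Let `H` be the Hermitian
form on `V × V` given by `H((v₁,v₂),(w₁,w₂)) = h v₁ w₁ - h v₂ w₂`.
If `W` is a totally `H`-isotropic complex subspace of `V × V` with `dim_ℂ W = N`, then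
`dim_ℂ (W ∩ (V × 0)) = dim_ℂ (W ∩ (0 × V))`. -/
theorem hermitian_isotropic_dim_inter_fst_eq_dim_inter_snd
    (V : Type*) [AddCommGroup V] [Module ℂ V]
    [FiniteDimensional ℂ V] (N : ℕ) (hV : finrank ℂ V = N)
    (h : V → V → ℂ)
    (h_add₁ : ∀ v v' w : V, h (v + v') w = h v w + h v' w)
    (h_add₂ : ∀ v w w' : V, h v (w + w') = h v w + h v w')
    (h_smul₁ : ∀ (c : ℂ) (v w : V), h (c • v) w = (starRingEnd ℂ) c * h v w)
    (h_smul₂ : ∀ (c : ℂ) (v w : V), h v (c • w) = c * h v w)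
    (h_herm : ∀ v w : V, h w v = (starRingEnd ℂ) (h v w))
    (h_nondeg : ∀ v : V, (∀ w : V, h v w = 0) → v = 0)
    (W : Submodule ℂ (V × V))
    (hW_iso : ∀ w ∈ W, ∀ w' ∈ W, h w.1 w'.1 - h w.2 w'.2 = 0)
    (hW_dim : finrank ℂ W = N) :
    finrank ℂ ↥(W ⊓ Submodule.fst ℂ V V) = finrank ℂ ↥(W ⊓ Submodule.snd ℂ V V) := by
  have h_zero₁ : ∀ w : V, h 0 w = 0 := by
    intro w
    have := h_add₁ 0 0 w
    rw [add_zero] at this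
    linear_combination -this
  have h_zero₂ : ∀ w : V, h w 0 = 0 := by
    intro w
    have := h_add₂ w 0 0
    rw [add_zero] at this
    linear_combination -this
  set f1 := LinearMap.fst ℂ V V with hf1
  set f2 := LinearMap.snd ℂ V V with hf2
  have hkf1 : LinearMap.ker f1 = Submodule.snd ℂ V V := rfl
  have hkf2 : LinearMap.ker f2 = Submodule.fst ℂ V V := rfl
  have mem_fst : ∀ x : V × V, x ∈ Submodule.fst ℂ V V ↔ x.2 = 0 := by
    intro x
    simp [Submodule.fst]
  have mem_snd : ∀ x : V × V, x ∈ Submodule.snd ℂ V V ↔ x.1 = 0 := by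
    intro x
    simp [Submodule.snd]
  -- rank-nullity on W
  have r1 : finrank ℂ (W.map f1) + finrank ℂ ↥(W ⊓ Submodule.snd ℂ V V) = N := by
    have := aux_finrank_map_add_inf_ker W f1
    rw [hkf1, hW_dim] at this
    exact this
  have r2 : finrank ℂ (W.map f2) + finrank ℂ ↥(W ⊓ Submodule.fst ℂ V V) = N := by
    have := aux_finrank_map_add_inf_ker W f2
    rw [hkf2, hW_dim] at this
    exact this
  -- the intersections map isomorphically into V
  have r3 : finrank ℂ ((W ⊓ Submodule.fst ℂ V V).map f1)
      = finrank ℂ ↥(W ⊓ Submodule.fst ℂ V V) := by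
    have := aux_finrank_map_add_inf_ker (W ⊓ Submodule.fst ℂ V V) f1
    rw [hkf1, inf_assoc, Submodule.fst_inf_snd, inf_bot_eq] at this
    simpa using this
  have r4 : finrank ℂ ((W ⊓ Submodule.snd ℂ V V).map f2)
      = finrank ℂ ↥(W ⊓ Submodule.snd ℂ V V) := by
    have := aux_finrank_map_add_inf_ker (W ⊓ Submodule.snd ℂ V V) f2
    rw [hkf2, inf_assoc, inf_comm (Submodule.snd ℂ V V), Submodule.fst_inf_snd, inf_bot_eq]
      at this
    simpa using this
  -- orthogonality
  have orth1 : ∀ u ∈ (W ⊓ Submodule.fst ℂ V V).map f1, ∀ u' ∈ W.map f1, h u u' = 0 := by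
    rintro u ⟨⟨a, b⟩, ⟨haW, hafst⟩, rfl⟩ u' ⟨⟨p, q⟩, hpW, rfl⟩
    rw [SetLike.mem_coe, mem_fst] at hafst
    obtain rfl : b = 0 := hafst
    have h5 := hW_iso (a, 0) haW (p, q) hpW
    simp only [h_zero₁] at h5
    simpa [hf1] using h5
  have orth2 : ∀ u ∈ (W ⊓ Submodule.snd ℂ V V).map f2, ∀ u' ∈ W.map f2, h u u' = 0 := by
    rintro u ⟨⟨a, b⟩, ⟨haW, hasnd⟩, rfl⟩ u' ⟨⟨p, q⟩, hpW, rfl⟩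
    rw [SetLike.mem_coe, mem_snd] at hasnd
    obtain rfl : a = 0 := hasnd
    have h5 := hW_iso (0, b) haW (p, q) hpW
    simp only [h_zero₁] at h5
    simpa [hf2] using h5
  have k1 := aux_orth_finrank_le_complex h h_add₁ h_add₂ h_smul₁ h_smul₂ h_herm h_nondeg
    _ _ orth1
  have k2 := aux_orth_finrank_le_complex h h_add₁ h_add₂ h_smul₁ h_smul₂ h_herm h_nondeg
    _ _ orth2
  rw [hV, r3] at k1
  rw [hV, r4] at k2
  omega
end

section
/- The map g ↦ graph(g) is a bijection from the group of isometries of b onto the set of subspaces W of V × V such that W is totally B-isotropic, dim_K W = N, W ∩ (V × 0) = 0, and W ∩ (0 × V) = 0. -/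
open Module

theorem mem_fst_iff {K V : Type*} [Field K] [AddCommGroup V] [Module K V]
    (x : V × V) : x ∈ Submodule.fst K V V ↔ x.2 = 0 := by
  simp [Submodule.fst]

theorem mem_snd_iff {K V : Type*} [Field K] [AddCommGroup V] [Module K V]
    (x : V × V) : x ∈ Submodule.snd K V V ↔ x.1 = 0 := by
  simp [Submodule.snd]

/-- The map `g ↦ graph g` is a bijection from the group of isometries of a
nondegenerate reflexive bilinear form `b` on `V` (with `dim_K V = N`) onto the set of
subspaces `W` of `V × V` that are totally isotropic for
`B((v₁,v₂),(w₁,w₂)) = b v₁ w₁ - b v₂ w₂`, have `dim_K W = N`, and satisfy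
`W ∩ (V × 0) = 0` and `W ∩ (0 × V) = 0`. -/
theorem graph_bijOn_isometries_isotropic
    (K : Type*) [Field K] (V : Type*) [AddCommGroup V] [Module K V]
    [FiniteDimensional K V] (N : ℕ) (hV : finrank K V = N)
    (b : V →ₗ[K] V →ₗ[K] K)
    (hb_nondeg : ∀ v : V, (∀ w : V, b v w = 0) → v = 0)
    (hb_refl : ∀ v w : V, b v w = 0 ↔ b w v = 0) :
    Set.BijOn (fun g : V ≃ₗ[K] V => LinearMap.graph (g : V →ₗ[K] V))
      {g : V ≃ₗ[K] V | ∀ v w : V, b (g v) (g w) = b v w}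
      {W : Submodule K (V × V) |
        (∀ w ∈ W, ∀ w' ∈ W, b w.1 w'.1 - b w.2 w'.2 = 0) ∧
        finrank K ↥W = N ∧
        W ⊓ Submodule.fst K V V = ⊥ ∧
        W ⊓ Submodule.snd K V V = ⊥} := by
  refine ⟨?_, ?_, ?_⟩
  · -- MapsTo
    intro g hg
    refine ⟨?_, ?_, ?_, ?_⟩
    · rintro ⟨a, c⟩ hw ⟨a', c'⟩ hw'
      rw [LinearMap.mem_graph_iff] at hw hw'
      simp only at hw hw' ⊢
      subst hw; subst hw'
      have h := hg a a'
      simp only [LinearEquiv.coe_coe]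
      rw [h, sub_self]
    · show finrank K ↥(LinearMap.graph (g : V →ₗ[K] V)) = N
      rw [← hV]
      have hgr : LinearMap.graph (g : V →ₗ[K] V) =
          LinearMap.range ((LinearMap.id : V →ₗ[K] V).prod (g : V →ₗ[K] V)) := by
        ext ⟨a, c⟩
        simp [LinearMap.mem_graph_iff, eq_comm]
      rw [hgr, LinearMap.finrank_range_of_inj]
      intro x y hxy
      simpa using congrArg Prod.fst hxy
    · show LinearMap.graph (g : V →ₗ[K] V) ⊓ Submodule.fst K V V = ⊥
      rw [eq_bot_iff]
      rintro ⟨a, c⟩ hmem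
      rw [Submodule.mem_inf, LinearMap.mem_graph_iff, mem_fst_iff] at hmem
      obtain ⟨h1, h2⟩ := hmem
      simp only at h1 h2
      subst h2
      have : a = 0 := by
        have := g.injective (by simpa using h1.symm : g a = g 0)
        simpa using this
      simp [this]
    · show LinearMap.graph (g : V →ₗ[K] V) ⊓ Submodule.snd K V V = ⊥
      rw [eq_bot_iff]
      rintro ⟨a, c⟩ hmem
      rw [Submodule.mem_inf, LinearMap.mem_graph_iff, mem_snd_iff] at hmem
      obtain ⟨h1, h2⟩ := hmem
      simp only at h1 h2
      subst h2
      have hc : c = 0 := by simpa using h1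
      simp [hc]
  · -- InjOn
    intro g _ g' _ h
    simp only at h
    ext v
    have hv : ((v, g v) : V × V) ∈ LinearMap.graph (g' : V →ₗ[K] V) := by
      rw [← h]
      exact ((g : V →ₗ[K] V).mem_graph_iff (v, g v)).mpr rfl
    rw [LinearMap.mem_graph_iff] at hv
    simpa using hv
  · -- SurjOn
    rintro W ⟨hiso, hdim, hfst, hsnd⟩
    set p : W →ₗ[K] V := (LinearMap.fst K V V).comp W.subtype with hpdef
    have hpinj : Function.Injective p := by
      intro x y hxy
      have hmem : ((x : V × V) - (y : V × V)) ∈ W ⊓ Submodule.snd K V V := by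
        rw [Submodule.mem_inf, mem_snd_iff]
        refine ⟨Submodule.sub_mem W x.2 y.2, ?_⟩
        have h : (x : V × V).1 = (y : V × V).1 := hxy
        simp [h]
      rw [hsnd, Submodule.mem_bot] at hmem
      exact Subtype.ext (sub_eq_zero.mp hmem)
    have hpbij : Function.Bijective p :=
      ⟨hpinj, (LinearMap.injective_iff_surjective_of_finrank_eq_finrank
        (by rw [hdim, hV])).mp hpinj⟩
    set e : W ≃ₗ[K] V := LinearEquiv.ofBijective p hpbij with hedef
    set g0 : V →ₗ[K] V :=
      (LinearMap.snd K V V).comp (W.subtype.comp e.symm.toLinearMap) with hg0def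
    have hkey : ∀ v : V, ((e.symm v : V × V)) = (v, g0 v) := by
      intro v
      have h1 : (e.symm v : V × V).1 = v := e.apply_symm_apply v
      exact Prod.ext h1 rfl
    have hgraph : LinearMap.graph g0 = W := by
      apply le_antisymm
      · rintro ⟨a, c⟩ h
        rw [LinearMap.mem_graph_iff] at h
        simp only at h
        subst h
        have hm := (e.symm a).2
        rwa [hkey a] at hm
      · rintro ⟨a, c⟩ hac
        have hsymm : e.symm a = ⟨(a, c), hac⟩ := by
          apply e.injective
          rw [e.apply_symm_apply]
          rfl
        have := congrArg Subtype.val hsymm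
        rw [hkey a] at this
        rw [LinearMap.mem_graph_iff]
        exact (congrArg Prod.snd this).symm
    have hisom : ∀ v w : V, b (g0 v) (g0 w) = b v w := by
      intro v w
      have hv : ((v, g0 v) : V × V) ∈ W := by
        rw [← hgraph]; exact (g0.mem_graph_iff (v, g0 v)).mpr rfl
      have hw : ((w, g0 w) : V × V) ∈ W := by
        rw [← hgraph]; exact (g0.mem_graph_iff (w, g0 w)).mpr rfl
      have h := hiso _ hv _ hw
      simp only at h
      exact (sub_eq_zero.mp h).symm
    have hg0inj : Function.Injective g0 := by
      rw [← LinearMap.ker_eq_bot, eq_bot_iff]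
      intro v hv
      rw [LinearMap.mem_ker] at hv
      rw [Submodule.mem_bot]
      apply hb_nondeg
      intro w
      rw [← hisom v w, hv]
      simp
    have hg0bij : Function.Bijective g0 :=
      ⟨hg0inj, (LinearMap.injective_iff_surjective).mp hg0inj⟩
    refine ⟨LinearEquiv.ofBijective g0 hg0bij, ?_, ?_⟩
    · intro v w
      exact hisom v w
    · show LinearMap.graph ((LinearEquiv.ofBijective g0 hg0bij : V ≃ₗ[K] V) : V →ₗ[K] V) = W
      have : ((LinearEquiv.ofBijective g0 hg0bij : V ≃ₗ[K] V) : V →ₗ[K] V) = g0 := rfl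
      rw [this, hgraph]
end

section
/- Assume char K ≠ 2. Let W and W' be totally B-isotropic subspaces of V × V with dim_K W = dim_K W' = N and dim_K (W ∩ (V × 0)) = dim_K (W' ∩ (V × 0)). Then there exist isometries g₁, g₂ of b such that (g₁ × g₂)(W) = W'. -/
/-!
Since `char K ≠ 2`, a reflexive form is `ε`-symmetric with `ε = ±1`, and `W` is a Lagrangian
subspace of `(V × V, b ⊕ -b)`. Its kernels `A = {v | (v, 0) ∈ W}` and `C = {w | (0, w) ∈ W}`
are totally isotropic, `pr₁ W = Aᗮ`, `pr₂ W = Cᗮ`, `dim A = dim C`, and modulo `A × C` the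
subspace `W` is the graph of an isometry `Aᗮ/A ≅ Cᗮ/C`. Witt's theorem for totally isotropic
subspaces (move one isotropic vector at a time, then recurse in the orthogonal of a hyperbolic
plane) gives isometries `g₁, g₂` carrying the kernels of `W` to those of `W'`. Two Lagrangians
with the same kernels differ by an isometry of `Aᗮ/A`; realised on a nondegenerate complement
`V₀` of `A` in `Aᗮ` and extended by the identity on `V₀ᗮ`, it becomes an isometry of `V`.
-/

open Module LinearMap Submodule

namespace Submodule

variable {F M N : Type*} [Field F] [AddCommGroup M] [Module F M] [AddCommGroup N] [Module F N]

theorem finrank_comap_subtype (Q B : Submodule F M) :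
    finrank F (B.comap Q.subtype) = finrank F ↥(Q ⊓ B) :=
  (equivMapOfInjective _ Q.injective_subtype _).finrank_eq.trans (by rw [map_comap_subtype])

theorem finrank_comap_inl (U : Submodule F (M × N)) :
    finrank F (U.comap (inl F M N)) = finrank F ↥(U ⊓ Submodule.fst F M N) :=
  (equivMapOfInjective _ inl_injective _).finrank_eq.trans
    (by rw [map_comap_eq, range_inl, inf_comm]; rfl)

theorem finrank_comap_inr (U : Submodule F (M × N)) :
    finrank F (U.comap (inr F M N)) = finrank F ↥(U ⊓ Submodule.snd F M N) :=
  (equivMapOfInjective _ inr_injective _).finrank_eq.trans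
    (by rw [map_comap_eq, range_inr, inf_comm]; rfl)

theorem comap_inl_map_prodMap (U : Submodule F (M × N)) (g₁ : M ≃ₗ[F] M)
    (g₂ : N ≃ₗ[F] N) :
    (U.map ((g₁ : M →ₗ[F] M).prodMap g₂)).comap (inl F M N)
      = (U.comap (inl F M N)).map (g₁ : M →ₗ[F] M) := by
  ext v
  simp [← LinearEquiv.eq_symm_apply]

theorem comap_inr_map_prodMap (U : Submodule F (M × N)) (g₁ : M ≃ₗ[F] M)
    (g₂ : N ≃ₗ[F] N) :
    (U.map ((g₁ : M →ₗ[F] M).prodMap g₂)).comap (inr F M N)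
      = (U.comap (inr F M N)).map (g₂ : N →ₗ[F] N) := by
  ext w
  simp [← LinearEquiv.eq_symm_apply]

theorem mk_add_mem_iff_sub_mem_comap_inr {U : Submodule F (M × N)} {a x : M} {y w : N}
    (ha : a ∈ U.comap (inl F M N)) (hxy : (x, y) ∈ U) :
    (a + x, w) ∈ U ↔ w - y ∈ U.comap (inr F M N) := by
  rw [show ((a + x, w) : M × N) = (a, 0) + (x, y) + (0, w - y) by ext <;> simp,
    add_mem_cancel_left (add_mem (show (a, (0 : N)) ∈ U from ha) hxy)]
  rfl

theorem exists_linearEquiv_forall_mem (U : Submodule F (M × N)) {V₀ : Submodule F M}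
    {V₂ : Submodule F N} (hV₀ : Disjoint (U.comap (inl F M N)) V₀)
    (hfst : U.map (LinearMap.fst F M N) = U.comap (inl F M N) ⊔ V₀)
    (hV₂ : Disjoint (U.comap (inr F M N)) V₂)
    (hsnd : U.map (LinearMap.snd F M N) = U.comap (inr F M N) ⊔ V₂) :
    ∃ σ : V₀ ≃ₗ[F] V₂, ∀ x : V₀, ((x : M), (σ x : N)) ∈ U := by
  -- `U ∩ (V₀ × V₂)` is the graph of `σ`: both projections from it are bijective
  let G := U ⊓ V₀.prod V₂
  have hG : ∀ g : G, (g : M × N) ∈ U ∧ (g : M × N).1 ∈ V₀ ∧ (g : M × N).2 ∈ V₂ :=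
    fun g => ⟨(mem_inf.mp g.2).1, (mem_inf.mp g.2).2⟩
  let p₁ : G →ₗ[F] V₀ :=
    ((LinearMap.fst F M N).comp G.subtype).codRestrict V₀ fun g => (hG g).2.1
  let p₂ : G →ₗ[F] V₂ :=
    ((LinearMap.snd F M N).comp G.subtype).codRestrict V₂ fun g => (hG g).2.2
  have hp₁ : Function.Bijective p₁ := by
    refine ⟨(injective_iff_map_eq_zero p₁).mpr fun g hg => ?_, fun x => ?_⟩
    · have h₁ : (g : M × N).1 = 0 := congrArg Subtype.val hg
      have h₂ : (g : M × N).2 ∈ U.comap (inr F M N) := by simpa [← h₁] using (hG g).1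
      exact Subtype.ext (Prod.ext h₁ (hV₂.eq_bot ▸ mem_inf.mpr ⟨h₂, (hG g).2.2⟩ :))
    · obtain ⟨⟨v, w⟩, hvw, hv⟩ : (x : M) ∈ U.map (LinearMap.fst F M N) :=
        hfst ▸ mem_sup_right x.2
      obtain ⟨c, hc, u, hu, rfl⟩ := mem_sup.mp (hsnd ▸ mem_map_of_mem hvw : w ∈ _)
      have hvu : (v, u) ∈ U := by simpa using sub_mem hvw (show ((0 : M), c) ∈ U from hc)
      exact ⟨⟨(v, u), hvu, (show v = x from hv) ▸ x.2, hu⟩, Subtype.ext hv⟩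
  have hp₂ : Function.Bijective p₂ := by
    refine ⟨(injective_iff_map_eq_zero p₂).mpr fun g hg => ?_, fun y => ?_⟩
    · have h₂ : (g : M × N).2 = 0 := congrArg Subtype.val hg
      have h₁ : (g : M × N).1 ∈ U.comap (inl F M N) := by simpa [← h₂] using (hG g).1
      exact Subtype.ext (Prod.ext (hV₀.eq_bot ▸ mem_inf.mpr ⟨h₁, (hG g).2.1⟩ :) h₂)
    · obtain ⟨⟨v, w⟩, hvw, hw⟩ : (y : N) ∈ U.map (LinearMap.snd F M N) :=
        hsnd ▸ mem_sup_right y.2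
      obtain ⟨a, ha, x, hx, rfl⟩ := mem_sup.mp (hfst ▸ mem_map_of_mem hvw : v ∈ _)
      have hxw : (x, w) ∈ U := by simpa using sub_mem hvw (show (a, (0 : N)) ∈ U from ha)
      exact ⟨⟨(x, w), hxw, hx, (show w = y from hw) ▸ y.2⟩, Subtype.ext hw⟩
  let e₁ := LinearEquiv.ofBijective p₁ hp₁
  refine ⟨e₁.symm.trans (LinearEquiv.ofBijective p₂ hp₂), fun x => ?_⟩
  have hx : ((x : M), _) = (e₁.symm x : M × N) :=
    Prod.ext (congrArg Subtype.val (e₁.apply_symm_apply x)).symm rfl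
  exact hx ▸ (hG _).1

end Submodule

namespace LinearMap.BilinForm

variable {F M : Type*} [Field F] [AddCommGroup M] [Module F M] {β : LinearMap.BilinForm F M}
  {ε : F}

theorem IsRefl.exists_eps_symm (hβ : β.IsRefl) (h2 : (2 : F) ≠ 0) :
    ∃ ε : F, (ε = 1 ∨ ε = -1) ∧ ∀ x y, β y x = ε * β x y := by
  have comm_of_ne_zero : ∀ x, β x x ≠ 0 → ∀ z, β x z = β z x := by
    intro x hx z
    -- reflexivity applied to `β x (β x x • z - β x z • x) = 0`
    have h := hβ x (β x x • z - β x z • x) (by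
      simp only [map_sub, map_smul, smul_eq_mul]
      ring)
    simp only [map_sub, map_smul, LinearMap.sub_apply, LinearMap.smul_apply, smul_eq_mul,
      sub_eq_zero] at h
    exact mul_left_cancel₀ hx (h.trans (mul_comm _ _)).symm
  by_cases hsymm : ∀ x y, β x y = β y x
  · exact ⟨1, .inl rfl, fun x y => by rw [one_mul, hsymm]⟩
  push Not at hsymm
  obtain ⟨x, y, hxy⟩ := hsymm
  have iso : ∀ z, β z y ≠ β y z → β z z = 0 := fun z hz =>
    not_not.mp fun h => hz (comm_of_ne_zero z h y)
  -- an anisotropic `u` commutes with everything, so `x ± u` would both be isotropic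
  have halt : ∀ u, β u u = 0 := by
    intro u
    by_contra hu
    have hcomm := comm_of_ne_zero u hu
    have hplus := iso (x + u) (by simpa [hcomm y] using hxy)
    have hminus := iso (x - u) (by simpa [hcomm y] using hxy)
    simp only [map_add, map_sub, LinearMap.add_apply, LinearMap.sub_apply, iso x hxy,
      hcomm x] at hplus hminus
    have h2u : (2 : F) * β u u = 0 := by linear_combination hplus + hminus
    exact hu ((mul_eq_zero.mp h2u).resolve_left h2)
  refine ⟨-1, .inr rfl, fun a b => ?_⟩
  have h := halt (a + b)
  simp only [map_add, LinearMap.add_apply, halt a, halt b] at h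
  linear_combination h

theorem exists_apply_ne_zero_and_apply_ne_zero (hβ : β.SeparatingLeft) {x y : M} (hx : x ≠ 0)
    (hy : y ≠ 0) : ∃ w, β x w ≠ 0 ∧ β y w ≠ 0 := by
  obtain ⟨w₁, hw₁⟩ : ∃ w, β x w ≠ 0 := not_forall.mp (mt (hβ x) hx)
  obtain ⟨w₂, hw₂⟩ : ∃ w, β y w ≠ 0 := not_forall.mp (mt (hβ y) hy)
  by_cases hy₁ : β y w₁ = 0
  · by_cases hx₂ : β x w₂ = 0
    · exact ⟨w₁ + w₂, by simpa [hx₂] using hw₁, by simpa [hy₁] using hw₂⟩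
    · exact ⟨w₂, hx₂, hw₂⟩
  · exact ⟨w₁, hw₁, hy₁⟩

theorem exists_apply_add_smul_self_eq_zero (h2 : (2 : F) ≠ 0) (hε : ε = 1 ∨ ε = -1)
    (hβε : ∀ x y, β y x = ε * β x y) {x w : M} (hx : β x x = 0) (hxw : β x w ≠ 0) :
    ∃ t : F, β (w + t • x) (w + t • x) = 0 := by
  refine ⟨-β w w / (2 * β x w), ?_⟩
  simp only [map_add, map_smul, LinearMap.add_apply, LinearMap.smul_apply, smul_eq_mul, hx,
    hβε x w]
  rcases hε with rfl | rfl
  · field_simp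
    ring
  · have hww : β w w = 0 := by
      have := hβε w w
      exact (mul_eq_zero.mp (by linear_combination this : (2 : F) * β w w = 0)).resolve_left h2
    simp [hww]

theorem restrict_span_pair_nondegenerate (hβ : β.IsRefl) {x f : M} (hx : β x x = 0)
    (hxf : β x f ≠ 0) : (β.restrict (span F {x, f})).Nondegenerate := by
  refine (IsRefl.nondegenerate_iff_separatingLeft (B := β.restrict _) fun p q => hβ p q).mpr ?_
  rintro ⟨m, hm⟩ hm₀
  obtain ⟨a, c, rfl⟩ := mem_span_pair.mp hm
  have hmx : β (a • x + c • f) x = 0 := hm₀ ⟨x, subset_span (by simp)⟩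
  have hmf : β (a • x + c • f) f = 0 := hm₀ ⟨f, subset_span (by simp)⟩
  have hc : c = 0 := by
    simp only [map_add, map_smul, LinearMap.add_apply, LinearMap.smul_apply, smul_eq_mul, hx,
      mul_zero, zero_add] at hmx
    exact (mul_eq_zero.mp hmx).resolve_right fun h => hxf (hβ _ _ h)
  have ha : a = 0 := by
    simpa [hc, hxf] using hmf
  simp [ha, hc]

theorem span_singleton_sup_orthogonal_inf_eq {B : Submodule F M} (hB : B ≤ β.orthogonal B)
    {x f : M} (hx : x ∈ B) (hfx : β f x ≠ 0) :
    span F {x} ⊔ (β.orthogonal (span F {x, f}) ⊓ B) = B := by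
  refine le_antisymm (sup_le (by simpa using hx) inf_le_right) fun m hm => ?_
  -- subtract from `m` the multiple of `x` that makes it orthogonal to `f`
  set c := β f m / β f x
  have hmc : m - c • x ∈ β.orthogonal (span F {x, f}) := by
    intro n hn
    obtain ⟨a, b, rfl⟩ := mem_span_pair.mp hn
    have hxm : β x m = 0 := hB hm x hx
    have hxx : β x x = 0 := hB hx x hx
    change β _ _ = 0
    simp [hxm, hxx, c, hfx]
  rw [← add_sub_cancel (c • x) m]
  exact add_mem_sup (smul_mem _ c (mem_span_singleton_self x))
    (mem_inf.mpr ⟨hmc, sub_mem hm (smul_mem _ c hx)⟩)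

theorem map_le_orthogonal_map (g : β.IsometryEquiv β) {A : Submodule F M}
    (hA : A ≤ β.orthogonal A) :
    A.map (g : M →ₗ[F] M) ≤ β.orthogonal (A.map (g : M →ₗ[F] M)) := by
  rintro _ ⟨p, hp, rfl⟩ _ ⟨q, hq, rfl⟩
  exact (g.map_app p q).trans (hA hp q hq)

theorem comap_subtype_le_orthogonal {Q B : Submodule F M} (hB : B ≤ β.orthogonal B) :
    B.comap Q.subtype ≤ (β.restrict Q).orthogonal (B.comap Q.subtype) :=
  fun _ hp q hq => hB hp q hq

section FiniteDimensional

variable [FiniteDimensional F M]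

theorem exists_isometryEquiv_apply_eq_of_apply_ne_zero (hβ : β.SeparatingLeft)
    (hε : ε = 1 ∨ ε = -1) (hβε : ∀ x y, β y x = ε * β x y) {x y : M}
    (hx : β x x = 0) (hy : β y y = 0) (hxy : β x y ≠ 0) :
    ∃ g : β.IsometryEquiv β, g x = y := by
  set c := β x y
  -- `x ↦ y`, `y ↦ ε • x` on the plane `span {x, y}`, and the identity on its orthogonal
  let g : M →ₗ[F] M := LinearMap.id + (c⁻¹ • β.flip y).smulRight (y - x)
    + ((ε * c⁻¹) • β.flip x).smulRight (ε • x - y)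
  have hg : ∀ m,
      g m = m + (c⁻¹ * β m y) • (y - x) + (ε * c⁻¹ * β m x) • (ε • x - y) :=
    fun m => by simp [g, mul_comm]
  have hiso : ∀ m n, β (g m) (g n) = β m n := by
    intro m n
    simp only [hg, map_add, map_smul, map_sub, LinearMap.add_apply, LinearMap.sub_apply,
      LinearMap.smul_apply, smul_eq_mul, hβε n y, hβε n x, hβε x y, hx, hy]
    rcases hε with rfl | rfl <;> field_simp <;> ring
  have hinj : Function.Injective g := (injective_iff_map_eq_zero g).mpr fun m hm =>
    hβ m fun w => (hiso m w).symm.trans (by rw [hm, map_zero, LinearMap.zero_apply])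
  refine ⟨{ LinearEquiv.ofInjectiveEndo g hinj with map_app' := hiso }, ?_⟩
  show g x = y
  rw [hg, hx, mul_zero, zero_smul, add_zero, inv_mul_cancel₀ hxy, one_smul, add_sub_cancel]

theorem exists_isometryEquiv_apply_eq (h2 : (2 : F) ≠ 0) (hβ : β.SeparatingLeft)
    (hε : ε = 1 ∨ ε = -1) (hβε : ∀ x y, β y x = ε * β x y) {x y : M}
    (hx : β x x = 0) (hy : β y y = 0) (hx₀ : x ≠ 0) (hy₀ : y ≠ 0) :
    ∃ g : β.IsometryEquiv β, g x = y := by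
  by_cases hxy : β x y ≠ 0
  · exact exists_isometryEquiv_apply_eq_of_apply_ne_zero hβ hε hβε hx hy hxy
  -- pass through an isotropic `u = w + t • x` paired non-trivially with both `x` and `y`
  obtain ⟨w, hxw, hyw⟩ := exists_apply_ne_zero_and_apply_ne_zero hβ hx₀ hy₀
  obtain ⟨t, hu⟩ := exists_apply_add_smul_self_eq_zero h2 hε hβε hx hxw
  have hyx : β y x = 0 := by rw [hβε, not_not.mp hxy, mul_zero]
  have hxu : β x (w + t • x) ≠ 0 := by simpa [hx] using hxw
  have huy : β (w + t • x) y ≠ 0 := by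
    rw [hβε]
    refine mul_ne_zero (by rcases hε with rfl | rfl <;> norm_num) ?_
    simpa [hyx] using hyw
  obtain ⟨g₁, hg₁⟩ := exists_isometryEquiv_apply_eq_of_apply_ne_zero hβ hε hβε hx hu hxu
  obtain ⟨g₂, hg₂⟩ := exists_isometryEquiv_apply_eq_of_apply_ne_zero hβ hε hβε hu hy huy
  exact ⟨g₁.trans g₂, by rw [← hg₂, ← hg₁]; rfl⟩

theorem restrict_orthogonal_nondegenerate (hβ : β.Nondegenerate) (hβr : β.IsRefl)
    {P : Submodule F M} (hP : (β.restrict P).Nondegenerate) :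
    (β.restrict (β.orthogonal P)).Nondegenerate := by
  refine nondegenerate_restrict_of_disjoint_orthogonal β hβr ?_
  rw [orthogonal_orthogonal hβ hβr]
  exact (isCompl_orthogonal_of_restrict_nondegenerate hβr hP).disjoint.symm

theorem restrict_nondegenerate_of_sup_eq_orthogonal (hβ : β.Nondegenerate) (hβr : β.IsRefl)
    {A V₀ : Submodule F M} (hAV₀ : Disjoint A V₀) (hsup : A ⊔ V₀ = β.orthogonal A) :
    (β.restrict V₀).Nondegenerate := by
  refine (IsRefl.nondegenerate_iff_separatingLeft (B := β.restrict V₀)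
    fun p q => hβr p q).mpr fun ⟨v, hv⟩ hv₀ => ?_
  -- `v` is orthogonal to `A ⊔ V₀ = Aᗮ`, hence lies in `Aᗮᗮ = A`
  have hvA : v ∈ A := by
    rw [← orthogonal_orthogonal hβ hβr A, ← hsup]
    intro n hn
    obtain ⟨a, ha, y, hy, rfl⟩ := mem_sup.mp hn
    have hav : β a v = 0 := (hsup ▸ mem_sup_right hv : v ∈ β.orthogonal A) a ha
    have hyv : β y v = 0 := hβr _ _ (hv₀ ⟨y, hy⟩)
    rw [map_add, LinearMap.add_apply, hav, hyv, add_zero]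
  exact Subtype.ext (hAV₀.eq_bot ▸ mem_inf.mpr ⟨hvA, hv⟩ :)

theorem exists_isometryEquiv_extend (hβ : β.IsRefl) {P : Submodule F M}
    (hP : (β.restrict P).Nondegenerate) (h : (β.restrict P).IsometryEquiv (β.restrict P)) :
    ∃ g : β.IsometryEquiv β, (∀ p : P, g p = h p) ∧ ∀ q ∈ β.orthogonal P, g q = q := by
  have hc := isCompl_orthogonal_of_restrict_nondegenerate hβ hP
  let e := prodEquivOfIsCompl P (β.orthogonal P) hc
  let g : M ≃ₗ[F] M :=
    e.symm ≪≫ₗ ((h : P ≃ₗ[F] P).prodCongr (LinearEquiv.refl F _)) ≪≫ₗ e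
  have hg : ∀ p q, g (e (p, q)) = h p + q := fun p q => by simp [g, e]
  refine ⟨{ g with map_app' := ?_ }, fun p => (by simpa [e] using hg p 0 : g p = h p),
    fun q hq => (by simpa [e] using hg 0 ⟨q, hq⟩ : g q = q)⟩
  intro m n
  obtain ⟨⟨p, q⟩, rfl⟩ := e.surjective m
  obtain ⟨⟨p', q'⟩, rfl⟩ := e.surjective n
  change β (g _) (g _) = _
  rw [hg, hg]
  have hpq : ∀ (p : P) (q : β.orthogonal P), β p q = 0 ∧ β q p = 0 := fun p q =>
    ⟨q.2 p p.2, hβ _ _ (q.2 p p.2)⟩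
  have hh : β (h p) (h p') = β p p' := h.map_app p' p
  simp [e, (hpq _ _).1, (hpq _ _).2, hh]

theorem finrank_orthogonal_inf_add_one {B : Submodule F M} (hB : B ≤ β.orthogonal B)
    {x f : M} (hx : x ∈ B) (hfx : β f x ≠ 0) :
    finrank F ↥(β.orthogonal (span F {x, f}) ⊓ B) + 1 = finrank F B := by
  have hx₀ : x ≠ 0 := by rintro rfl; simp at hfx
  have hdisj : span F {x} ⊓ (β.orthogonal (span F {x, f}) ⊓ B) = ⊥ :=
    disjoint_iff.mp (disjoint_span_singleton_of_notMem
      fun hxQ : x ∈ β.orthogonal (span F {x, f}) ⊓ B =>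
        hfx ((mem_inf.mp hxQ).1 f (subset_span (by simp)))).symm
  have := finrank_sup_add_finrank_inf_eq (span F {x}) (β.orthogonal (span F {x, f}) ⊓ B)
  rw [span_singleton_sup_orthogonal_inf_eq hB hx hfx, hdisj, finrank_bot,
    finrank_span_singleton hx₀] at this
  omega

theorem exists_restrict_nondegenerate_forall_sup_eq (hβ : β.Nondegenerate) (hβr : β.IsRefl)
    {x : M} (hx : β x x = 0) (hx₀ : x ≠ 0) :
    ∃ Q : Submodule F M, (β.restrict Q).Nondegenerate ∧ x ∈ β.orthogonal Q ∧
      ∀ B : Submodule F M, B ≤ β.orthogonal B → x ∈ B →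
        span F {x} ⊔ (Q ⊓ B) = B ∧ finrank F ↥(Q ⊓ B) + 1 = finrank F B := by
  obtain ⟨f, hxf⟩ : ∃ f, β x f ≠ 0 := not_forall.mp (mt (hβ.1 x) hx₀)
  have hfx : β f x ≠ 0 := fun h => hxf (hβr _ _ h)
  exact ⟨β.orthogonal (span F {x, f}),
    restrict_orthogonal_nondegenerate hβ hβr (restrict_span_pair_nondegenerate hβr hx hxf),
    le_orthogonal_orthogonal hβr (subset_span (by simp)), fun B hB hxB =>
      ⟨span_singleton_sup_orthogonal_inf_eq hB hxB hfx, finrank_orthogonal_inf_add_one hB hxB hfx⟩⟩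

theorem exists_isometryEquiv_map_eq_of_restrict (hβ : β.IsRefl) {P Q : Submodule F M}
    (hQ : (β.restrict Q).Nondegenerate) (hPQ : P ≤ β.orthogonal Q) {A A' : Submodule F M}
    (hA : P ⊔ (Q ⊓ A) = A) (hA' : P ⊔ (Q ⊓ A') = A')
    (h : (β.restrict Q).IsometryEquiv (β.restrict Q))
    (hh : (A.comap Q.subtype).map (h : Q →ₗ[F] Q) = A'.comap Q.subtype) :
    ∃ g : β.IsometryEquiv β, A.map (g : M →ₗ[F] M) = A' := by
  obtain ⟨g, hgQ, hgP⟩ := exists_isometryEquiv_extend hβ hQ h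
  refine ⟨g, ?_⟩
  have hP : P.map (g : M →ₗ[F] M) = P :=
    le_antisymm (by rintro _ ⟨p, hp, rfl⟩; simpa [hgP p (hPQ hp)] using hp)
      fun p hp => ⟨p, hp, hgP p (hPQ hp)⟩
  have hQA : (Q ⊓ A).map (g : M →ₗ[F] M) = Q ⊓ A' := by
    rw [← map_comap_subtype, ← map_comap_subtype, ← hh, ← map_comp, ← map_comp]
    congr 1
    ext p
    exact hgQ p
  rw [← hA, ← hA', Submodule.map_sup, hP, hQA]

theorem exists_isometryEquiv_map_eq (h2 : (2 : F) ≠ 0) (hβ : β.SeparatingLeft)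
    (hε : ε = 1 ∨ ε = -1) (hβε : ∀ x y, β y x = ε * β x y) {A A' : Submodule F M}
    (hA : A ≤ β.orthogonal A) (hA' : A' ≤ β.orthogonal A')
    (hAA' : finrank F A = finrank F A') :
    ∃ g : β.IsometryEquiv β, A.map (g : M →ₗ[F] M) = A' := by
  obtain ⟨d, hd⟩ : ∃ d, finrank F A = d := ⟨_, rfl⟩
  induction d generalizing M with
  | zero =>
    refine ⟨IsometryEquiv.refl β, ?_⟩
    rw [Submodule.finrank_eq_zero.mp hd, Submodule.finrank_eq_zero.mp (hAA'.symm.trans hd),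
      Submodule.map_bot]
  | succ d ih =>
    have hβr : β.IsRefl := fun x y h => by rw [hβε, h, mul_zero]
    have hβn : β.Nondegenerate := (IsRefl.nondegenerate_iff_separatingLeft hβr).mpr hβ
    obtain ⟨x, hxA, hx₀⟩ := exists_mem_ne_zero_of_ne_bot fun h : A = ⊥ => by
      rw [h, finrank_bot] at hd; omega
    obtain ⟨x', hx'A', hx'₀⟩ := exists_mem_ne_zero_of_ne_bot fun h : A' = ⊥ => by
      rw [hAA', h, finrank_bot] at hd; omega
    -- move `x` to `x'`, then split off a hyperbolic plane through `x'` and recurse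
    obtain ⟨g₀, hg₀⟩ := exists_isometryEquiv_apply_eq h2 hβ hε hβε (hA hxA x hxA)
      (hA' hx'A' x' hx'A') hx₀ hx'₀
    set A₁ := A.map (g₀ : M →ₗ[F] M)
    have hA₁ : A₁ ≤ β.orthogonal A₁ := map_le_orthogonal_map g₀ hA
    have hx'A₁ : x' ∈ A₁ := ⟨x, hxA, hg₀⟩
    obtain ⟨Q, hQ, hx'Q, hsplit⟩ :=
      exists_restrict_nondegenerate_forall_sup_eq hβn hβr (hA' hx'A' x' hx'A') hx'₀
    obtain ⟨hA₁Q, hQA₁⟩ := hsplit A₁ hA₁ hx'A₁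
    obtain ⟨hA'Q, hQA'⟩ := hsplit A' hA' hx'A'
    have hA₁d : finrank F A₁ = d + 1 := (LinearEquiv.finrank_map_eq _ A).trans hd
    obtain ⟨h, hh⟩ := ih (β := β.restrict Q) hQ.1 (fun p q => hβε p q)
      (comap_subtype_le_orthogonal hA₁) (comap_subtype_le_orthogonal hA')
      (by rw [finrank_comap_subtype, finrank_comap_subtype]; omega)
      (by rw [finrank_comap_subtype]; omega)
    obtain ⟨g₁, hg₁⟩ := exists_isometryEquiv_map_eq_of_restrict hβr hQ
      (span_le.mpr (Set.singleton_subset_iff.mpr hx'Q)) hA₁Q hA'Q h hh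
    refine ⟨g₀.trans g₁, ?_⟩
    rw [← hg₁, ← map_comp]
    rfl

end FiniteDimensional

def prodNeg (β : LinearMap.BilinForm F M) : LinearMap.BilinForm F (M × M) :=
  β.compl₁₂ (fst F M M) (fst F M M) - β.compl₁₂ (snd F M M) (snd F M M)

@[simp]
theorem prodNeg_apply (p q : M × M) : β.prodNeg p q = β p.1 q.1 - β p.2 q.2 := rfl

theorem Nondegenerate.prodNeg (hβ : β.Nondegenerate) : β.prodNeg.Nondegenerate := by
  refine ⟨fun p hp => Prod.ext (hβ.1 _ fun w => ?_) (hβ.1 _ fun w => ?_),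
    fun p hp => Prod.ext (hβ.2 _ fun w => ?_) (hβ.2 _ fun w => ?_)⟩
  · simpa using hp (w, 0)
  · simpa using hp (0, w)
  · simpa using hp (w, 0)
  · simpa using hp (0, w)

/-- Lagrangian for the form `β ⊕ (-β)` on `M × M`. -/
structure IsLagrangian (β : LinearMap.BilinForm F M) (U : Submodule F (M × M)) : Prop where
  isotropic : ∀ u ∈ U, ∀ u' ∈ U, β u.1 u'.1 - β u.2 u'.2 = 0
  finrank_eq : finrank F U = finrank F M

namespace IsLagrangian

variable {U : Submodule F (M × M)}

theorem apply_eq (hU : IsLagrangian β U) {x y w z : M} (hxw : (x, w) ∈ U) (hyz : (y, z) ∈ U) :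
    β w z = β x y :=
  (sub_eq_zero.mp (hU.isotropic _ hxw _ hyz)).symm

theorem comap_inl_le_orthogonal (hU : IsLagrangian β U) :
    U.comap (inl F M M) ≤ β.orthogonal (U.comap (inl F M M)) := fun a ha b hb => by
  simpa using hU.isotropic _ hb _ ha

theorem comap_inr_le_orthogonal (hU : IsLagrangian β U) :
    U.comap (inr F M M) ≤ β.orthogonal (U.comap (inr F M M)) := fun a ha b hb => by
  simpa using hU.isotropic _ hb _ ha

theorem map_prodMap (hU : IsLagrangian β U) (g₁ g₂ : β.IsometryEquiv β) :
    IsLagrangian β (U.map ((g₁ : M →ₗ[F] M).prodMap g₂)) where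
  isotropic := by
    rintro _ ⟨u, hu, rfl⟩ _ ⟨u', hu', rfl⟩
    simpa using hU.isotropic u hu u' hu'
  finrank_eq :=
    (((g₁ : M ≃ₗ[F] M).prodCongr (g₂ : M ≃ₗ[F] M)).finrank_map_eq U).trans
      hU.finrank_eq

variable [FiniteDimensional F M]

theorem mem_iff (hβ : β.Nondegenerate) (hU : IsLagrangian β U) {p : M × M} :
    p ∈ U ↔ ∀ u ∈ U, β u.1 p.1 = β u.2 p.2 := by
  have hle : U ≤ β.prodNeg.orthogonal U := fun p hp u hu => hU.isotropic u hu p hp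
  have heq : U = β.prodNeg.orthogonal U := eq_of_le_of_finrank_eq hle <| by
    rw [finrank_orthogonal hβ.prodNeg, finrank_prod, hU.finrank_eq, Nat.add_sub_cancel]
  conv_lhs => rw [heq]
  exact forall₂_congr fun u _ => sub_eq_zero

theorem comap_inl_eq (hβ : β.Nondegenerate) (hU : IsLagrangian β U) :
    U.comap (inl F M M) = β.orthogonal (U.map (fst F M M)) := by
  ext v
  rw [mem_comap, hU.mem_iff hβ, mem_orthogonal_iff]
  simp

theorem comap_inr_eq (hβ : β.Nondegenerate) (hU : IsLagrangian β U) :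
    U.comap (inr F M M) = β.orthogonal (U.map (snd F M M)) := by
  ext w
  rw [mem_comap, hU.mem_iff hβ, mem_orthogonal_iff]
  simpa [eq_comm] using forall_comm

theorem map_fst_eq (hβ : β.Nondegenerate) (hβr : β.IsRefl) (hU : IsLagrangian β U) :
    U.map (fst F M M) = β.orthogonal (U.comap (inl F M M)) := by
  rw [hU.comap_inl_eq hβ, orthogonal_orthogonal hβ hβr]

theorem map_snd_eq (hβ : β.Nondegenerate) (hβr : β.IsRefl) (hU : IsLagrangian β U) :
    U.map (snd F M M) = β.orthogonal (U.comap (inr F M M)) := by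
  rw [hU.comap_inr_eq hβ, orthogonal_orthogonal hβ hβr]

theorem finrank_comap_inl_eq (hβ : β.Nondegenerate) (hβr : β.IsRefl) (hU : IsLagrangian β U) :
    finrank F (U.comap (inl F M M)) = finrank F (U.comap (inr F M M)) := by
  have h := ((fst F M M).domRestrict U).finrank_range_add_finrank_ker
  have hker : finrank F ↥(U ⊓ ker (fst F M M)) = finrank F (U.comap (inr F M M)) :=
    (finrank_comap_inr U).symm
  rw [range_domRestrict, ker_domRestrict, finrank_comap_subtype, hker, hU.finrank_eq,
    hU.map_fst_eq hβ hβr, finrank_orthogonal hβ] at h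
  have := Submodule.finrank_le (U.comap (inl F M M))
  omega

theorem exists_isometryEquiv_map_prodMap_id_eq (hβ : β.Nondegenerate) (hβr : β.IsRefl)
    {U' : Submodule F (M × M)} (hU : IsLagrangian β U) (hU' : IsLagrangian β U')
    (hinl : U.comap (inl F M M) = U'.comap (inl F M M))
    (hinr : U.comap (inr F M M) = U'.comap (inr F M M)) :
    ∃ g : β.IsometryEquiv β, U.map ((g : M →ₗ[F] M).prodMap LinearMap.id) = U' := by
  obtain ⟨V₀, hAV₀, hV₀⟩ :=
    IsModularLattice.exists_disjoint_and_sup_eq hU.comap_inl_le_orthogonal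
  obtain ⟨V₂, hCV₂, hV₂⟩ :=
    IsModularLattice.exists_disjoint_and_sup_eq hU.comap_inr_le_orthogonal
  obtain ⟨σ, hσ⟩ := exists_linearEquiv_forall_mem U hAV₀
    (by rw [hU.map_fst_eq hβ hβr, hV₀]) hCV₂ (by rw [hU.map_snd_eq hβ hβr, hV₂])
  obtain ⟨σ', hσ'⟩ := exists_linearEquiv_forall_mem U' (hinl ▸ hAV₀)
    (by rw [hU'.map_fst_eq hβ hβr, ← hinl, hV₀]) (hinr ▸ hCV₂)
    (by rw [hU'.map_snd_eq hβ hβr, ← hinr, hV₂])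
  let α : (β.restrict V₀).IsometryEquiv (β.restrict V₀) :=
    { σ.trans σ'.symm with
      map_app' := fun x y => by
        change β (σ'.symm (σ x)) (σ'.symm (σ y)) = β x y
        rw [← hU'.apply_eq (hσ' _) (hσ' _), ← hU.apply_eq (hσ x) (hσ y)]
        simp }
  obtain ⟨g, hgV₀, hgA⟩ := exists_isometryEquiv_extend hβr
    (restrict_nondegenerate_of_sup_eq_orthogonal hβ hβr hAV₀ hV₀) α
  refine ⟨g, eq_of_le_of_finrank_eq ?_ ?_⟩
  · rintro _ ⟨⟨v, w⟩, hvw, rfl⟩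
    obtain ⟨a, ha, x, hx, rfl⟩ := mem_sup.mp
      (hV₀ ▸ hU.map_fst_eq hβ hβr ▸ mem_map_of_mem hvw : v ∈ U.comap (inl F M M) ⊔ V₀)
    have hga : g a = a := hgA a fun y hy =>
      hβr _ _ ((hV₀ ▸ mem_sup_right hy : y ∈ β.orthogonal (U.comap (inl F M M))) a ha)
    have hσ'α : (σ' (α ⟨x, hx⟩) : M) = σ ⟨x, hx⟩ :=
      congrArg Subtype.val (σ'.apply_symm_apply _)
    change (g (a + x), w) ∈ U'
    rw [map_add, hga, hgV₀ ⟨x, hx⟩,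
      mk_add_mem_iff_sub_mem_comap_inr (U := U') (hinl ▸ ha) (hσ' _), hσ'α, ← hinr]
    exact (mk_add_mem_iff_sub_mem_comap_inr ha (hσ _)).mp hvw
  · rw [hU'.finrank_eq, ← hU.finrank_eq]
    exact ((g : M ≃ₗ[F] M).prodCongr (LinearEquiv.refl F M)).finrank_map_eq U

end IsLagrangian

end LinearMap.BilinForm

open LinearMap.BilinForm

/-- Assume `char K ≠ 2`.  Let `b` be a nondegenerate reflexive bilinear
form on a finite-dimensional `K`-vector space `V` with `dim_K V = N`, and let `B` be the
form `B((v₁,v₂),(w₁,w₂)) = b v₁ w₁ - b v₂ w₂` on `V × V`.  If `W` and `W'` are totally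
`B`-isotropic subspaces of `V × V` with `dim_K W = dim_K W' = N` and
`dim_K (W ∩ (V × 0)) = dim_K (W' ∩ (V × 0))`, then there exist isometries `g₁, g₂` of `b`
with `(g₁ × g₂)(W) = W'`. -/
theorem isotropic_same_dim_inter_exists_isometries_map
    (K : Type*) [Field K] (hchar : ringChar K ≠ 2)
    (V : Type*) [AddCommGroup V] [Module K V]
    [FiniteDimensional K V] (N : ℕ) (hV : finrank K V = N)
    (b : V →ₗ[K] V →ₗ[K] K)
    (hb_nondeg : ∀ v : V, (∀ w : V, b v w = 0) → v = 0)
    (hb_refl : ∀ v w : V, b v w = 0 ↔ b w v = 0)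
    (W W' : Submodule K (V × V))
    (hW_iso : ∀ w ∈ W, ∀ w' ∈ W, b w.1 w'.1 - b w.2 w'.2 = 0)
    (hW'_iso : ∀ w ∈ W', ∀ w' ∈ W', b w.1 w'.1 - b w.2 w'.2 = 0)
    (hW_dim : finrank K ↥W = N) (hW'_dim : finrank K ↥W' = N)
    (h_inter : finrank K ↥(W ⊓ Submodule.fst K V V)
      = finrank K ↥(W' ⊓ Submodule.fst K V V)) :
    ∃ g₁ g₂ : V ≃ₗ[K] V,
      (∀ v w : V, b (g₁ v) (g₁ w) = b v w) ∧
      (∀ v w : V, b (g₂ v) (g₂ w) = b v w) ∧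
      Submodule.map (LinearMap.prodMap (g₁ : V →ₗ[K] V) (g₂ : V →ₗ[K] V)) W = W' := by
  have hbr : b.IsRefl := fun v w => (hb_refl v w).mp
  have hbn : b.Nondegenerate := (IsRefl.nondegenerate_iff_separatingLeft hbr).mpr hb_nondeg
  have h2 : (2 : K) ≠ 0 := Ring.two_ne_zero hchar
  obtain ⟨ε, hε, hbε⟩ := IsRefl.exists_eps_symm hbr h2
  have hW : IsLagrangian b W := ⟨hW_iso, hW_dim.trans hV.symm⟩
  have hW' : IsLagrangian b W' := ⟨hW'_iso, hW'_dim.trans hV.symm⟩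
  have hA : finrank K (W.comap (inl K V V)) = finrank K (W'.comap (inl K V V)) := by
    rw [finrank_comap_inl, finrank_comap_inl, h_inter]
  have hC : finrank K (W.comap (inr K V V)) = finrank K (W'.comap (inr K V V)) := by
    rw [← hW.finrank_comap_inl_eq hbn hbr, ← hW'.finrank_comap_inl_eq hbn hbr, hA]
  obtain ⟨g₁, hg₁⟩ := exists_isometryEquiv_map_eq h2 hb_nondeg hε hbε
    hW.comap_inl_le_orthogonal hW'.comap_inl_le_orthogonal hA
  obtain ⟨g₂, hg₂⟩ := exists_isometryEquiv_map_eq h2 hb_nondeg hε hbε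
    hW.comap_inr_le_orthogonal hW'.comap_inr_le_orthogonal hC
  obtain ⟨g, hg⟩ := (hW.map_prodMap g₁ g₂).exists_isometryEquiv_map_prodMap_id_eq hbn hbr
    hW' (by rw [comap_inl_map_prodMap, hg₁]) (by rw [comap_inr_map_prodMap, hg₂])
  refine ⟨g₁.trans g, g₂, fun v w => (g₁.trans g).map_app w v, fun v w => g₂.map_app w v,
    ?_⟩
  rw [← hg, ← map_comp]
  rfl
end

section
/- Two subspaces W and W' of V × V with dim_K W = dim_K W' = N lie in the same orbit of the action of GL(V) × GL(V) on subspaces of V × V given by (g₁, g₂) · W = (g₁ × g₂)(W) if and only if dim_K (W ∩ (V × 0)) = dim_K (W' ∩ (V × 0)) and dim_K (W ∩ (0 × V)) = dim_K (W' ∩ (0 × V)). -/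
/-!
Put `A = W ⊓ (V × 0)`, `B = W ⊓ (0 × V)` and choose a complement `C` of `A ⊔ B` in `W`. The first
projection is injective on `A ⊔ C` (its kernel meets `W` in `B`) and the second one on `B ⊔ C`, so
bases `(u, 0)` of `A`, `(0, v)` of `B` and `(w₁, w₂)` of `C` extend `u ∪ w₁` and `v ∪ w₂` to bases
`x` and `y` of `V`. In these bases `W` has a normal form depending only on `dim A`, `dim B` and
`dim W`, and `g₁ × g₂`, with `gᵢ` the change-of-basis automorphisms, carries one normal form to the
other. Conversely, `g₁ × g₂` preserves `V × 0` and `0 × V`, hence the two dimensions.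
-/

open Module Submodule

theorem exists_le_disjoint_and_sup_eq {α : Type*} [Lattice α] [BoundedOrder α]
    [IsModularLattice α] [ComplementedLattice α] {a b : α} (h : a ≤ b) :
    ∃ c ≤ b, Disjoint a c ∧ a ⊔ c = b := by
  obtain ⟨c, hc⟩ := exists_isCompl a
  refine ⟨c ⊓ b, inf_le_right, hc.disjoint.mono_right inf_le_left, ?_⟩
  rw [← sup_inf_assoc_of_le _ h, hc.sup_eq_top, top_inf_eq]

theorem disjoint_inf_sup_of_disjoint_sup {α : Type*} [Lattice α] [OrderBot α]
    [IsModularLattice α] {w p q c : α} (hpq : Disjoint p q) (hcw : c ≤ w)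
    (h : Disjoint (w ⊓ p ⊔ w ⊓ q) c) : Disjoint (w ⊓ p ⊔ c) q := by
  have hq : Disjoint (w ⊓ q) (w ⊓ p ⊔ c) :=
    (hpq.symm.mono inf_le_right inf_le_right).disjoint_sup_right_of_disjoint_sup_left
      (by rwa [sup_comm])
  refine disjoint_iff_inf_le.mpr ?_
  calc (w ⊓ p ⊔ c) ⊓ q ≤ w ⊓ q ⊓ (w ⊓ p ⊔ c) :=
        le_inf (le_inf (inf_le_left.trans (sup_le inf_le_left hcw)) inf_le_right) inf_le_left
    _ = ⊥ := hq.eq_bot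

section DivisionRing

variable {K M : Type*} [DivisionRing K] [AddCommGroup M] [Module K M]

theorem Submodule.finrank_sup_of_disjoint {P Q : Submodule K M} [FiniteDimensional K P]
    [FiniteDimensional K Q] (h : Disjoint P Q) :
    finrank K ↥(P ⊔ Q) = finrank K P + finrank K Q := by
  have := finrank_sup_add_finrank_inf_eq P Q
  rwa [h.eq_bot, finrank_bot, add_zero] at this

theorem Submodule.exists_linearIndependent_span_eq (P : Submodule K M) [FiniteDimensional K P]
    {n : ℕ} (h : finrank K P = n) :
    ∃ v : Fin n → M, LinearIndependent K v ∧ span K (Set.range v) = P := by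
  let b := Module.finBasisOfFinrankEq K P h
  refine ⟨P.subtype ∘ b, b.linearIndependent.map' P.subtype P.ker_subtype, ?_⟩
  rw [Set.range_comp, span_image, b.span_eq, map_top, range_subtype]

theorem LinearIndependent.exists_basis_sum_inl [FiniteDimensional K M] {ι : Type*} [Fintype ι]
    {v : ι → M} (hv : LinearIndependent K v) {n : ℕ} (hn : Fintype.card ι + n = finrank K M) :
    ∃ b : Basis (ι ⊕ Fin n) K M, ∀ i, b (.inl i) = v i := by
  obtain ⟨T, hT⟩ := (span K (Set.range v)).exists_isCompl
  have hTn : finrank K T = n := by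
    have := finrank_add_eq_of_isCompl hT
    rw [finrank_span_eq_card hv] at this
    omega
  obtain ⟨w, hw, hwT⟩ := T.exists_linearIndependent_span_eq hTn
  have hind : LinearIndependent K (Sum.elim v w) := hv.sum_type hw (hwT ▸ hT.disjoint)
  have hspan : ⊤ ≤ span K (Set.range (Sum.elim v w)) := by
    rw [Set.Sum.elim_range, span_union, hwT, hT.sup_eq_top]
  exact ⟨Basis.mk hind hspan, fun i => Basis.mk_apply hind hspan (.inl i)⟩

theorem LinearIndependent.exists_basis_sum_inl_eq_comp {V : Type*} [AddCommGroup V] [Module K V]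
    [FiniteDimensional K V] {m c : ℕ} {v : Fin m ⊕ Fin c → M} (hv : LinearIndependent K v)
    {f : M →ₗ[K] V} (hf : Disjoint (span K (Set.range v)) (LinearMap.ker f)) :
    ∃ x : Basis ((Fin m ⊕ Fin c) ⊕ Fin (finrank K V - (m + c))) K V, ∀ i, x (.inl i) = f (v i) := by
  have hfv := hv.map hf
  have hcard := hfv.fintype_card_le_finrank
  simp only [Fintype.card_sum, Fintype.card_fin] at hcard
  exact hfv.exists_basis_sum_inl (by simp only [Fintype.card_sum, Fintype.card_fin]; omega)

theorem LinearEquiv.finrank_map_inf_of_map_eq (e : M ≃ₗ[K] M) {P : Submodule K M}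
    (hP : map (e : M →ₗ[K] M) P = P) (W : Submodule K M) :
    finrank K ↥(map (e : M →ₗ[K] M) W ⊓ P) = finrank K ↥(W ⊓ P) := by
  rw [← hP, ← map_inf _ e.injective, hP]
  exact e.finrank_map_eq _

end DivisionRing

section Prod

variable {R M₁ M₂ N₁ N₂ : Type*} [Semiring R] [AddCommMonoid M₁] [AddCommMonoid M₂]
  [AddCommMonoid N₁] [AddCommMonoid N₂] [Module R M₁] [Module R M₂] [Module R N₁] [Module R N₂]
  (g₁ : M₁ ≃ₗ[R] N₁) (g₂ : M₂ ≃ₗ[R] N₂)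

theorem Submodule.map_prodMap_fst :
    map (LinearMap.prodMap (g₁ : M₁ →ₗ[R] N₁) (g₂ : M₂ →ₗ[R] N₂)) (fst R M₁ M₂) =
      fst R N₁ N₂ := by
  ext ⟨x, y⟩
  simpa [Submodule.fst, eq_comm] using fun _ => g₁.surjective x

theorem Submodule.map_prodMap_snd :
    map (LinearMap.prodMap (g₁ : M₁ →ₗ[R] N₁) (g₂ : M₂ →ₗ[R] N₂)) (snd R M₁ M₂) =
      snd R N₁ N₂ := by
  ext ⟨x, y⟩
  simpa [Submodule.snd, eq_comm] using fun _ => g₂.surjective y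

end Prod

section NormalForm

variable {K V : Type*} [DivisionRing K] [AddCommGroup V] [Module K V]

theorem disjoint_inf_fst_inf_snd (W : Submodule K (V × V)) :
    Disjoint (W ⊓ fst K V V) (W ⊓ snd K V V) :=
  (disjoint_iff.mpr (fst_inf_snd K V V)).mono inf_le_right inf_le_right

theorem finrank_inf_fst_add_finrank_inf_snd_le [FiniteDimensional K V]
    (W : Submodule K (V × V)) :
    finrank K ↥(W ⊓ fst K V V) + finrank K ↥(W ⊓ snd K V V) ≤ finrank K W := by
  rw [← finrank_sup_of_disjoint (disjoint_inf_fst_inf_snd W)]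
  exact finrank_mono (sup_le inf_le_left inf_le_left)

noncomputable def prodNormalForm {a b c r s : ℕ} (x : Basis ((Fin a ⊕ Fin c) ⊕ Fin r) K V)
    (y : Basis ((Fin b ⊕ Fin c) ⊕ Fin s) K V) : Submodule K (V × V) :=
  span K (Set.range fun i => (x (.inl (.inl i)), 0)) ⊔
    span K (Set.range fun j => (0, y (.inl (.inl j)))) ⊔
    span K (Set.range fun k => (x (.inl (.inr k)), y (.inl (.inr k))))

theorem map_prodMap_prodNormalForm {a b c r s : ℕ} (x : Basis ((Fin a ⊕ Fin c) ⊕ Fin r) K V)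
    (y : Basis ((Fin b ⊕ Fin c) ⊕ Fin s) K V) (g₁ g₂ : V ≃ₗ[K] V) :
    map (LinearMap.prodMap (g₁ : V →ₗ[K] V) (g₂ : V →ₗ[K] V)) (prodNormalForm x y) =
      prodNormalForm (x.map g₁) (y.map g₂) := by
  simp [prodNormalForm, Submodule.map_sup, map_span, ← Set.range_comp, Function.comp_def]

theorem prodNormalForm_eq_sup_span {a b c r s : ℕ} {x : Basis ((Fin a ⊕ Fin c) ⊕ Fin r) K V}
    {y : Basis ((Fin b ⊕ Fin c) ⊕ Fin s) K V} {u : Fin a → V × V} {v : Fin b → V × V}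
    {w : Fin c → V × V} (hu : Set.range u ⊆ fst K V V) (hv : Set.range v ⊆ snd K V V)
    (hx : ∀ i, x (.inl i) = (Sum.elim u w i).1) (hy : ∀ j, y (.inl j) = (Sum.elim v w j).2) :
    prodNormalForm x y =
      span K (Set.range u) ⊔ span K (Set.range v) ⊔ span K (Set.range w) := by
  have hu_eq : (fun i => (x (.inl (.inl i)), (0 : V))) = u :=
    funext fun i => Prod.ext (hx (.inl i)) ((mem_bot K).mp (hu ⟨i, rfl⟩)).symm
  have hv_eq : (fun j => ((0 : V), y (.inl (.inl j)))) = v :=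
    funext fun j => Prod.ext ((mem_bot K).mp (hv ⟨j, rfl⟩)).symm (hy (.inl j))
  have hw_eq : (fun k => (x (.inl (.inr k)), y (.inl (.inr k)))) = w :=
    funext fun k => Prod.ext (hx (.inr k)) (hy (.inr k))
  rw [prodNormalForm, hu_eq, hv_eq, hw_eq]

theorem exists_prodNormalForm_eq [FiniteDimensional K V] (W : Submodule K (V × V)) {a b c : ℕ}
    (ha : finrank K ↥(W ⊓ fst K V V) = a) (hb : finrank K ↥(W ⊓ snd K V V) = b)
    (hc : finrank K W = a + b + c) :
    ∃ (x : Basis ((Fin a ⊕ Fin c) ⊕ Fin (finrank K V - (a + c))) K V)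
      (y : Basis ((Fin b ⊕ Fin c) ⊕ Fin (finrank K V - (b + c))) K V),
      prodNormalForm x y = W := by
  set A := W ⊓ fst K V V
  set B := W ⊓ snd K V V
  have hAB : Disjoint A B := disjoint_inf_fst_inf_snd W
  obtain ⟨C, hCW, hABC, hsup⟩ :=
    exists_le_disjoint_and_sup_eq (sup_le inf_le_left inf_le_left : A ⊔ B ≤ W)
  have hCc : finrank K C = c := by
    have := finrank_sup_of_disjoint hABC
    rw [hsup, finrank_sup_of_disjoint hAB, ha, hb, hc] at this
    omega
  obtain ⟨u, hu, hspan_u⟩ := A.exists_linearIndependent_span_eq ha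
  obtain ⟨v, hv, hspan_v⟩ := B.exists_linearIndependent_span_eq hb
  obtain ⟨w, hw, hspan_w⟩ := C.exists_linearIndependent_span_eq hCc
  have hfst_snd : Disjoint (fst K V V) (snd K V V) := disjoint_iff.mpr (fst_inf_snd K V V)
  obtain ⟨x, hx⟩ := (hu.sum_type hw (by rw [hspan_u, hspan_w]; exact hABC.mono_left le_sup_left)
    ).exists_basis_sum_inl_eq_comp (f := LinearMap.fst K V V) (by
      rw [Set.Sum.elim_range, span_union, hspan_u, hspan_w]
      exact disjoint_inf_sup_of_disjoint_sup hfst_snd hCW hABC)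
  obtain ⟨y, hy⟩ := (hv.sum_type hw (by rw [hspan_v, hspan_w]; exact hABC.mono_left le_sup_right)
    ).exists_basis_sum_inl_eq_comp (f := LinearMap.snd K V V) (by
      rw [Set.Sum.elim_range, span_union, hspan_v, hspan_w]
      exact disjoint_inf_sup_of_disjoint_sup hfst_snd.symm hCW (by rwa [sup_comm]))
  refine ⟨x, y, ?_⟩
  rw [prodNormalForm_eq_sup_span (span_le.mp (hspan_u.le.trans inf_le_right))
    (span_le.mp (hspan_v.le.trans inf_le_right)) hx hy, hspan_u, hspan_v, hspan_w, hsup]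

end NormalForm

theorem same_orbit_iff_dim_inter_eq_general
    (K : Type*) [DivisionRing K] (V : Type*) [AddCommGroup V] [Module K V]
    [FiniteDimensional K V] (N : ℕ)
    (W W' : Submodule K (V × V))
    (hW_dim : finrank K ↥W = N) (hW'_dim : finrank K ↥W' = N) :
    (∃ g₁ g₂ : V ≃ₗ[K] V,
        Submodule.map (LinearMap.prodMap (g₁ : V →ₗ[K] V) (g₂ : V →ₗ[K] V)) W = W') ↔
      (finrank K ↥(W ⊓ Submodule.fst K V V) = finrank K ↥(W' ⊓ Submodule.fst K V V) ∧
       finrank K ↥(W ⊓ Submodule.snd K V V) = finrank K ↥(W' ⊓ Submodule.snd K V V)) := by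
  constructor
  · rintro ⟨g₁, g₂, rfl⟩
    exact ⟨((g₁.prodCongr g₂).finrank_map_inf_of_map_eq (map_prodMap_fst g₁ g₂) W).symm,
      ((g₁.prodCongr g₂).finrank_map_inf_of_map_eq (map_prodMap_snd g₁ g₂) W).symm⟩
  · rintro ⟨ha, hb⟩
    have hle := finrank_inf_fst_add_finrank_inf_snd_le W
    generalize hWa : finrank K ↥(W ⊓ fst K V V) = a at ha hle
    generalize hWb : finrank K ↥(W ⊓ snd K V V) = b at hb hle
    obtain ⟨x, y, rfl⟩ := exists_prodNormalForm_eq W hWa hWb (c := N - (a + b)) (by omega)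
    obtain ⟨x', y', rfl⟩ :=
      exists_prodNormalForm_eq W' ha.symm hb.symm (c := N - (a + b)) (by omega)
    refine ⟨x.equiv x' (.refl _), y.equiv y' (.refl _), ?_⟩
    simp only [map_prodMap_prodNormalForm, Basis.map_equiv, Equiv.refl_symm, Basis.reindex_refl]

/-- Let `K` be a division ring and `V` a finite-dimensional `K`-vector
space with `dim_K V = N`.  Two subspaces `W, W'` of `V × V` with
`dim_K W = dim_K W' = N` lie in the same orbit of the action of `GL(V) × GL(V)` on
subspaces of `V × V` (by `(g₁,g₂) · W = (g₁ × g₂)(W)`) if and only if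
`dim_K (W ∩ (V × 0)) = dim_K (W' ∩ (V × 0))` and
`dim_K (W ∩ (0 × V)) = dim_K (W' ∩ (0 × V))`. -/
theorem same_orbit_iff_dim_inter_eq
    (K : Type*) [DivisionRing K] (V : Type*) [AddCommGroup V] [Module K V]
    [FiniteDimensional K V] (N : ℕ) (hV : finrank K V = N)
    (W W' : Submodule K (V × V))
    (hW_dim : finrank K ↥W = N) (hW'_dim : finrank K ↥W' = N) :
    (∃ g₁ g₂ : V ≃ₗ[K] V,
        Submodule.map (LinearMap.prodMap (g₁ : V →ₗ[K] V) (g₂ : V →ₗ[K] V)) W = W') ↔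
      (finrank K ↥(W ⊓ Submodule.fst K V V) = finrank K ↥(W' ⊓ Submodule.fst K V V) ∧
       finrank K ↥(W ⊓ Submodule.snd K V V) = finrank K ↥(W' ⊓ Submodule.snd K V V)) :=
  same_orbit_iff_dim_inter_eq_general K V N W W' hW_dim hW'_dim
end

section
/- Let p > q ≥ 0. The action of O(p,q+1) on the set of Q'-isotropic lines in ℝ × ℝ^{p+q+1}, where g ∈ O(p,q+1) acts via the automorphism (t,y) ↦ (t, g y), has exactly two orbits: the nonempty set of Q'-isotropic lines contained in {0} × ℝ^{p+q+1}, and the nonempty set of Q'-isotropic lines not contained in {0} × ℝ^{p+q+1}. -/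
/-!
A `Q'`-isotropic line lying in `{0} × V` is spanned by `(0, x)` with `x ≠ 0` isotropic for `b`;
any other is spanned by `(1, x)` with `b(x, x) = -1`. Since `g` fixes the first coordinate, it
remains to see that `O(b)` is transitive on each of these two sets of vectors. Reflections do this:
if `b(x, x) = b(z, z)`, the reflection in `x - z` (or the reflection in `x + z` followed by the one
in `z`) maps `x` to `z`. For isotropic `x, z` this needs `b(x, z) ≠ 0`; when `b(x, z) = 0`,
nondegeneracy provides an isotropic `w` pairing nontrivially with both, and one passes through `w`.
Both orbits are nonempty: with `e₀` positive and `eₚ` negative basis vectors, `e₀ + eₚ` is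
isotropic and `b(eₚ, eₚ) = -1`.
-/

open Module

/-- The symmetric bilinear form `b^{p,q}` on `ℝ^{p+q}`:
`b^{p,q}(x,y) = Σ_{i<p} x_i y_i − Σ_{p≤i<p+q} x_i y_i`. -/
noncomputable def bpq (p q : ℕ) (x y : Fin (p + q) → ℝ) : ℝ :=
  ∑ i : Fin (p + q), if (i : ℕ) < p then x i * y i else -(x i * y i)

namespace Submodule

variable {R M N N' : Type*} [Semiring R] [AddCommMonoid M] [Module R M] [AddCommMonoid N]
  [Module R N] [AddCommMonoid N'] [Module R N']

lemma span_singleton_le_snd_iff (v : M × N) : span R {v} ≤ snd R M N ↔ v.1 = 0 := by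
  simp [span_singleton_le_iff_mem, snd]

lemma map_prodMap_id_le_snd_iff (f : N →ₗ[R] N') (ℓ : Submodule R (M × N)) :
    ℓ.map (LinearMap.prodMap LinearMap.id f) ≤ snd R M N' ↔ ℓ ≤ snd R M N := by
  rw [map_le_iff_le_comap]
  rfl

end Submodule

namespace LinearMap.BilinForm

variable {K V : Type*} [Field K] [AddCommGroup V] [Module K V]

def orthogonalGroup (B : LinearMap.BilinForm K V) : Subgroup (V ≃ₗ[K] V) where
  carrier := {g | B.IsOrthogonal g}
  mul_mem' hg hh x y := (hg _ _).trans (hh x y)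
  one_mem' _ _ := rfl
  inv_mem' {g} hg x y := by
    simpa using (hg (g.symm x) (g.symm y)).symm

variable {B : LinearMap.BilinForm K V}

lemma exists_map_eq_of_mem_orbit {x z : V} (h : z ∈ MulAction.orbit B.orthogonalGroup x)
    (t : K) : ∃ g : V ≃ₗ[K] V, B.IsOrthogonal g ∧
      (Submodule.span K {(t, x)}).map (LinearMap.prodMap LinearMap.id (g : V →ₗ[K] V)) =
        Submodule.span K {(t, z)} := by
  obtain ⟨⟨g, hg⟩, rfl⟩ := h
  exact ⟨g, hg, by simp [Submodule.map_span]⟩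

lemma exists_apply_ne_zero_and_apply_ne_zero_s11 (hsep : B.SeparatingLeft) {x z : V}
    (hx : x ≠ 0) (hz : z ≠ 0) : ∃ y, B x y ≠ 0 ∧ B z y ≠ 0 := by
  obtain ⟨y₁, hy₁⟩ : ∃ y, B x y ≠ 0 := by
    by_contra! h
    exact hx (hsep x h)
  obtain ⟨y₂, hy₂⟩ : ∃ y, B z y ≠ 0 := by
    by_contra! h
    exact hz (hsep z h)
  by_cases hzy₁ : B z y₁ = 0
  · by_cases hxy₂ : B x y₂ = 0
    · exact ⟨y₁ + y₂, by simpa [hxy₂] using hy₁, by simpa [hzy₁] using hy₂⟩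
    · exact ⟨y₂, hxy₂, hy₂⟩
  · exact ⟨y₁, hy₁, hzy₁⟩

section TwoNeZero

variable [NeZero (2 : K)]

lemma mem_orbit_of_apply_sub_ne_zero (hB : B.IsSymm) {x z : V}
    (hxz : B x x = B z z) (h : B (x - z) (x - z) ≠ 0) :
    z ∈ MulAction.orbit B.orthogonalGroup x := by
  have hr : IsReflective B (x - z) := .of_dvd_two B (Ne.isUnit h).dvd
  -- the reflection in `x - z` moves `x` by exactly `x - z`, as `B (x - z) (x - z) = 2 B (x - z) x`
  have hcoroot : hr.coroot B x = 1 := by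
    apply mul_left_cancel₀ h
    rw [IsReflective.apply_self_mul_coroot_apply, mul_one]
    have := hB.eq z x
    simp only [map_sub, LinearMap.sub_apply] at this ⊢
    linear_combination hxz - this
  refine ⟨⟨Module.reflection (IsReflective.coroot_apply_self B hr),
    hr.isOrthogonal_reflection B (isSymm_iff.mp hB)⟩, ?_⟩
  change Module.reflection (IsReflective.coroot_apply_self B hr) x = z
  rw [Module.reflection_apply, hcoroot, one_smul, sub_sub_cancel]

lemma mem_orbit_of_apply_self_eq (hB : B.IsSymm) {x z : V}
    (hxz : B x x = B z z) (hx : B x x ≠ 0) :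
    z ∈ MulAction.orbit B.orthogonalGroup x := by
  by_cases hsub : B (x - z) (x - z) = 0
  · -- then `B (x + z) (x + z) = 4 B x x`, so `x` reflects to `-z`, which reflects to `z`
    simp only [map_sub, LinearMap.sub_apply] at hsub
    have hneg : -z ∈ MulAction.orbit B.orthogonalGroup x := by
      refine mem_orbit_of_apply_sub_ne_zero hB (by simpa using hxz) ?_
      simp only [sub_neg_eq_add, map_add, LinearMap.add_apply]
      intro h
      have h4 : (2 : K) * 2 * B x x = 0 := by linear_combination h + hsub + 2 * hxz
      simp [two_ne_zero, hx] at h4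
    have hz : B (-z - z) (-z - z) ≠ 0 := by
      simp [show -z - z = (-2 : K) • z by module, two_ne_zero, ← hxz, hx]
    rw [← MulAction.orbit_eq_iff.mpr hneg]
    exact mem_orbit_of_apply_sub_ne_zero hB (by simp) hz
  · exact mem_orbit_of_apply_sub_ne_zero hB hxz hsub

lemma mem_orbit_of_isotropic_of_apply_ne_zero (hB : B.IsSymm) {x z : V}
    (hx : B x x = 0) (hz : B z z = 0) (hxz : B x z ≠ 0) :
    z ∈ MulAction.orbit B.orthogonalGroup x := by
  refine mem_orbit_of_apply_sub_ne_zero hB (hx.trans hz.symm) ?_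
  have hsymm := hB.eq z x
  simp only [map_sub, LinearMap.sub_apply, hx, hz] at hsymm ⊢
  intro h
  have h2 : (2 : K) * B x z = 0 := by linear_combination -h - hsymm
  exact hxz ((mul_eq_zero.mp h2).resolve_left two_ne_zero)

lemma exists_isotropic_of_apply_ne_zero (hB : B.IsSymm) {x z y : V} (hx : B x x = 0)
    (hxz : B x z = 0) (hxy : B x y ≠ 0) (hzy : B z y ≠ 0) :
    ∃ w, B w w = 0 ∧ B x w ≠ 0 ∧ B w z ≠ 0 := by
  refine ⟨y - (B y y / (2 * B x y)) • x, ?_, ?_, ?_⟩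
  · simp only [map_sub, map_smul, LinearMap.sub_apply, LinearMap.smul_apply, smul_eq_mul, hx,
      hB.eq y x]
    field_simp
    ring
  · simpa [hx] using hxy
  · simp only [map_sub, map_smul, LinearMap.sub_apply, LinearMap.smul_apply, hxz, smul_zero,
      sub_zero]
    rwa [hB.eq]

lemma mem_orbit_of_isotropic (hB : B.IsSymm) (hsep : B.SeparatingLeft) {x z : V}
    (hx₀ : x ≠ 0) (hz₀ : z ≠ 0) (hx : B x x = 0) (hz : B z z = 0) :
    z ∈ MulAction.orbit B.orthogonalGroup x := by
  by_cases hxz : B x z = 0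
  · obtain ⟨y, hxy, hzy⟩ := exists_apply_ne_zero_and_apply_ne_zero_s11 hsep hx₀ hz₀
    obtain ⟨w, hw, hxw, hwz⟩ := exists_isotropic_of_apply_ne_zero hB hx hxz hxy hzy
    rw [← MulAction.orbit_eq_iff.mpr (mem_orbit_of_isotropic_of_apply_ne_zero hB hx hw hxw)]
    exact mem_orbit_of_isotropic_of_apply_ne_zero hB hw hz hwz
  · exact mem_orbit_of_isotropic_of_apply_ne_zero hB hx hz hxz

end TwoNeZero

variable (B) in
def IsIsotropicLine (ℓ : Submodule K (K × V)) : Prop :=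
  finrank K ℓ = 1 ∧ ∀ v ∈ ℓ, v.1 ^ 2 + B v.2 v.2 = 0

lemma isIsotropicLine_span_singleton {v : K × V} (hv : v ≠ 0) (h : v.1 ^ 2 + B v.2 v.2 = 0) :
    B.IsIsotropicLine (Submodule.span K {v}) := by
  refine ⟨finrank_span_singleton hv, fun w hw ↦ ?_⟩
  obtain ⟨c, rfl⟩ := Submodule.mem_span_singleton.mp hw
  simp only [Prod.smul_fst, Prod.smul_snd, map_smul, LinearMap.smul_apply, smul_eq_mul]
  linear_combination c ^ 2 * h

lemma IsIsotropicLine.exists_eq_span_zero {ℓ : Submodule K (K × V)} (h : B.IsIsotropicLine ℓ)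
    (hℓ : ℓ ≤ Submodule.snd K K V) : ∃ x ≠ 0, B x x = 0 ∧ ℓ = Submodule.span K {(0, x)} := by
  have : ℓ ≠ ⊥ := by
    rintro rfl
    simp [IsIsotropicLine] at h
  obtain ⟨v, hv, hv₀⟩ := Submodule.exists_mem_ne_zero_of_ne_bot this
  have hv₁ : v.1 = 0 := by simpa [Submodule.snd] using hℓ hv
  refine ⟨v.2, fun h₂ ↦ hv₀ (Prod.ext hv₁ h₂), by simpa [hv₁] using h.2 v hv, ?_⟩
  rw [← hv₁]
  exact eq_span_singleton_of_mem_of_finrank_eq_one h.1 hv hv₀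

lemma IsIsotropicLine.exists_eq_span_one {ℓ : Submodule K (K × V)} (h : B.IsIsotropicLine ℓ)
    (hℓ : ¬ ℓ ≤ Submodule.snd K K V) : ∃ x, B x x = -1 ∧ ℓ = Submodule.span K {(1, x)} := by
  obtain ⟨v, hv, hv₁⟩ := SetLike.not_le_iff_exists.mp hℓ
  replace hv₁ : v.1 ≠ 0 := by simpa [Submodule.snd] using hv₁
  have hu : ((1 : K), (v.1)⁻¹ • v.2) ∈ ℓ := by
    convert ℓ.smul_mem (v.1)⁻¹ hv using 1
    simp [Prod.ext_iff, hv₁]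
  refine ⟨_, ?_, eq_span_singleton_of_mem_of_finrank_eq_one h.1 hu (by simp)⟩
  linear_combination h.2 _ hu

theorem exists_isOrthogonal_map_eq_iff [NeZero (2 : K)] (hB : B.IsSymm)
    (hsep : B.SeparatingLeft) {ℓ ℓ' : Submodule K (K × V)} (hℓ : B.IsIsotropicLine ℓ)
    (hℓ' : B.IsIsotropicLine ℓ') :
    (∃ g : V ≃ₗ[K] V, B.IsOrthogonal g ∧
        ℓ.map (LinearMap.prodMap LinearMap.id (g : V →ₗ[K] V)) = ℓ') ↔
      (ℓ ≤ Submodule.snd K K V ↔ ℓ' ≤ Submodule.snd K K V) := by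
  refine ⟨fun ⟨g, _, hg⟩ ↦ hg ▸ (Submodule.map_prodMap_id_le_snd_iff _ ℓ).symm, fun hiff ↦ ?_⟩
  by_cases h : ℓ ≤ Submodule.snd K K V
  · obtain ⟨x, hx₀, hx, rfl⟩ := hℓ.exists_eq_span_zero h
    obtain ⟨z, hz₀, hz, rfl⟩ := hℓ'.exists_eq_span_zero (hiff.mp h)
    exact exists_map_eq_of_mem_orbit (mem_orbit_of_isotropic hB hsep hx₀ hz₀ hx hz) 0
  · obtain ⟨x, hx, rfl⟩ := hℓ.exists_eq_span_one h
    obtain ⟨z, hz, rfl⟩ := hℓ'.exists_eq_span_one (mt hiff.mpr h)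
    exact exists_map_eq_of_mem_orbit
      (mem_orbit_of_apply_self_eq hB (hx.trans hz.symm) (by simp [hx])) 1

end LinearMap.BilinForm

def signature (p q : ℕ) (i : Fin (p + q)) : ℝ := if (i : ℕ) < p then 1 else -1

noncomputable def signatureForm (p q : ℕ) : LinearMap.BilinForm ℝ (Fin (p + q) → ℝ) :=
  Matrix.toBilin' (Matrix.diagonal (signature p q))

lemma signatureForm_apply (p q : ℕ) (x y : Fin (p + q) → ℝ) :
    signatureForm p q x y = bpq p q x y := by
  simp only [signatureForm, Matrix.toBilin'_apply', Matrix.mulVec_diagonal, dotProduct, bpq,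
    signature]
  refine Finset.sum_congr rfl fun i _ ↦ ?_
  split_ifs <;> ring

lemma signatureForm_single_single (p q : ℕ) (i j : Fin (p + q)) :
    signatureForm p q (Pi.single i 1) (Pi.single j 1) = if i = j then signature p q i else 0 := by
  simp [signatureForm, Matrix.diagonal_apply]

lemma isSymm_signatureForm (p q : ℕ) : (signatureForm p q).IsSymm :=
  LinearMap.BilinForm.isSymm_def.mpr fun x y ↦ by
    simp only [signatureForm_apply, bpq, mul_comm (x _)]

lemma separatingLeft_signatureForm (p q : ℕ) : (signatureForm p q).SeparatingLeft :=
  (LinearMap.BilinForm.nondegenerate_toBilin'_of_det_ne_zero' _ <| by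
    rw [Matrix.det_diagonal]
    exact Finset.prod_ne_zero_iff.mpr fun i _ ↦ by unfold signature; split_ifs <;> norm_num).1

open LinearMap.BilinForm in
/-- Let `p > q ≥ 0`.  The action of `O(p,q+1)` on the set of
`Q'`-isotropic lines in `ℝ × ℝ^{p+q+1}` (where `Q'(t,x) = t² + Q^{p,q+1}(x)` and
`g ∈ O(p,q+1)` acts via `(t,y) ↦ (t, g y)`) has exactly two orbits: the nonempty set of
isotropic lines contained in `{0} × ℝ^{p+q+1}`, and the nonempty set of isotropic lines
not contained in `{0} × ℝ^{p+q+1}`.  (Two isotropic lines lie in the same orbit if and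
only if they are both contained, or both not contained, in `{0} × ℝ^{p+q+1}`.) -/
theorem isotropic_lines_two_orbits (p q : ℕ) (hpq : q < p) :
    (∃ ℓ : Submodule ℝ (ℝ × (Fin (p + (q + 1)) → ℝ)),
      (finrank ℝ ↥ℓ = 1 ∧ ∀ v ∈ ℓ, v.1 ^ 2 + bpq p (q + 1) v.2 v.2 = 0) ∧
      ℓ ≤ Submodule.snd ℝ ℝ (Fin (p + (q + 1)) → ℝ)) ∧
    (∃ ℓ : Submodule ℝ (ℝ × (Fin (p + (q + 1)) → ℝ)),
      (finrank ℝ ↥ℓ = 1 ∧ ∀ v ∈ ℓ, v.1 ^ 2 + bpq p (q + 1) v.2 v.2 = 0) ∧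
      ¬ ℓ ≤ Submodule.snd ℝ ℝ (Fin (p + (q + 1)) → ℝ)) ∧
    (∀ ℓ ℓ' : Submodule ℝ (ℝ × (Fin (p + (q + 1)) → ℝ)),
      (finrank ℝ ↥ℓ = 1 ∧ ∀ v ∈ ℓ, v.1 ^ 2 + bpq p (q + 1) v.2 v.2 = 0) →
      (finrank ℝ ↥ℓ' = 1 ∧ ∀ v ∈ ℓ', v.1 ^ 2 + bpq p (q + 1) v.2 v.2 = 0) →
      ((∃ g : (Fin (p + (q + 1)) → ℝ) ≃ₗ[ℝ] (Fin (p + (q + 1)) → ℝ),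
          (∀ x y : Fin (p + (q + 1)) → ℝ,
            bpq p (q + 1) (g x) (g y) = bpq p (q + 1) x y) ∧
          Submodule.map
            (LinearMap.prodMap (LinearMap.id : ℝ →ₗ[ℝ] ℝ)
              (g : (Fin (p + (q + 1)) → ℝ) →ₗ[ℝ] (Fin (p + (q + 1)) → ℝ))) ℓ = ℓ') ↔
        (ℓ ≤ Submodule.snd ℝ ℝ (Fin (p + (q + 1)) → ℝ) ↔
          ℓ' ≤ Submodule.snd ℝ ℝ (Fin (p + (q + 1)) → ℝ)))) := by
  have hp : 0 < p := by omega
  simp only [← signatureForm_apply]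
  set B := signatureForm p (q + 1)
  set e₀ : Fin (p + (q + 1)) → ℝ := Pi.single ⟨0, by omega⟩ 1
  set e₁ : Fin (p + (q + 1)) → ℝ := Pi.single ⟨p, by omega⟩ 1
  have h₀₀ : B e₀ e₀ = 1 := by simp [B, e₀, signatureForm_single_single,
    signature, hp]
  have h₁₁ : B e₁ e₁ = -1 := by simp [B, e₁, signatureForm_single_single, signature]
  have h₀₁ : B e₀ e₁ = 0 := by simp [B, e₀, e₁, signatureForm_single_single, hp.ne']
  have h₁₀ : B e₁ e₀ = 0 := by rw [(isSymm_signatureForm _ _).eq, h₀₁]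
  refine ⟨⟨_, isIsotropicLine_span_singleton (v := (0, e₀ + e₁)) ?_ ?_,
      (Submodule.span_singleton_le_snd_iff _).mpr rfl⟩,
    ⟨_, isIsotropicLine_span_singleton (v := (1, e₁)) (by simp) (by simp [h₁₁]),
      (Submodule.span_singleton_le_snd_iff _).not.mpr one_ne_zero⟩,
    fun ℓ ℓ' hℓ hℓ' ↦ exists_isOrthogonal_map_eq_iff (isSymm_signatureForm _ _)
      (separatingLeft_signatureForm _ _) hℓ hℓ'⟩
  · intro h
    simpa [h₀₀, h₀₁] using congrArg (fun v ↦ B e₀ v.2) h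
  · simp [h₀₀, h₀₁, h₁₀, h₁₁]
end

section
/- Let W be a complex subspace of V_ℂ with dim_ℂ W = n that is totally isotropic for b_ℂ (i.e. b_ℂ(z,z') = 0 for all z, z' ∈ W) and contains no nonzero real vector. Then there exists a unique complex structure I on V that is an isometry of b (i.e. b(I v, I w) = b(v,w) for all v, w) and satisfies W = {z ∈ V_ℂ : I_ℂ z = −i·z}. -/
open Module TensorProduct

/-! The conjugate `W̄` of `W` is again isotropic, and `W ∩ W̄ = 0` because `z + z̄` and `i(z - z̄)`
are real vectors of `W` for `z ∈ W ∩ W̄`; by dimension count `V_ℂ = W ⊕ W̄`. The map `J` acting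
as `-i` on `W` and `i` on `W̄` squares to `-1`, preserves `b_ℂ` since both summands are isotropic,
and commutes with conjugation, so it is the complexification of a real `I`. Conversely, for any
real `I` with `W` as its `-i`-eigenspace, `I_ℂ` acts as `i` on `W̄`, so `I_ℂ = J`. -/

theorem Submodule.finrank_map_semilinearEquiv {R M : Type*} [Ring R] [AddCommGroup M]
    [Module R M] {σ σ' : R →+* R} [RingHomInvPair σ σ'] [RingHomInvPair σ' σ]
    (e : M ≃ₛₗ[σ] M) (p : Submodule R M) : finrank R (p.map (e : M →ₛₗ[σ] M)) = finrank R p := by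
  have hσ : Function.Bijective σ :=
    ⟨Function.LeftInverse.injective (g := σ') fun r => RingHomInvPair.comp_apply_eq,
      Function.RightInverse.surjective (g := σ') fun r => RingHomInvPair.comp_apply_eq₂⟩
  have := rank_eq_of_equiv_equiv σ (e.submoduleMap p).toAddEquiv hσ fun r m =>
    (e.submoduleMap p).map_smulₛₗ r m
  rw [finrank, finrank, this]

namespace LinearMap

variable {E : Type*} [AddCommGroup E] [Module ℂ E] {p q : Submodule ℂ E}

noncomputable def complexStructureOfIsCompl (h : IsCompl p q) : E →ₗ[ℂ] E :=
  ofIsCompl h (-Complex.I • p.subtype) (Complex.I • q.subtype)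

variable (h : IsCompl p q)

theorem complexStructureOfIsCompl_apply_left {z : E} (hz : z ∈ p) :
    complexStructureOfIsCompl h z = -Complex.I • z :=
  ofIsCompl_apply_left h ⟨z, hz⟩

theorem complexStructureOfIsCompl_apply_right {z : E} (hz : z ∈ q) :
    complexStructureOfIsCompl h z = Complex.I • z :=
  ofIsCompl_apply_right h ⟨z, hz⟩

theorem complexStructureOfIsCompl_eq {f : E →ₗ[ℂ] E} (hp : ∀ z ∈ p, f z = -Complex.I • z)
    (hq : ∀ z ∈ q, f z = Complex.I • z) : complexStructureOfIsCompl h = f :=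
  ofIsCompl_eq h (fun z => (hp z z.2).symm) (fun z => (hq z z.2).symm)

theorem complexStructureOfIsCompl_comp_self :
    complexStructureOfIsCompl h ∘ₗ complexStructureOfIsCompl h = -id := by
  refine ext_on_codisjoint h.codisjoint (fun z hz => ?_) (fun z hz => ?_)
  · simp [complexStructureOfIsCompl_apply_left h hz, smul_smul]
  · simp [complexStructureOfIsCompl_apply_right h hz, smul_smul]

theorem eigenspace_complexStructureOfIsCompl :
    Module.End.eigenspace (complexStructureOfIsCompl h) (-Complex.I) = p := by
  refine (eq_of_le_of_inf_le_of_le_sup (z := q) (fun z hz => ?_) (fun z hz => ?_)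
    (h.sup_eq_top ▸ le_top)).symm
  · rw [Module.End.mem_eigenspace_iff, complexStructureOfIsCompl_apply_left h hz]
  · obtain ⟨hz, hzq⟩ := Submodule.mem_inf.mp hz
    rw [Module.End.mem_eigenspace_iff, complexStructureOfIsCompl_apply_right h hzq,
      ← sub_eq_zero, ← sub_smul] at hz
    rw [(smul_eq_zero.mp hz).resolve_left (by simp [Complex.ext_iff])]
    exact p.zero_mem

theorem complexStructureOfIsCompl_isometry (B : E →ₗ[ℂ] E →ₗ[ℂ] ℂ)
    (hp : ∀ z ∈ p, ∀ z' ∈ p, B z z' = 0) (hq : ∀ z ∈ q, ∀ z' ∈ q, B z z' = 0) (z z' : E) :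
    B (complexStructureOfIsCompl h z) (complexStructureOfIsCompl h z') = B z z' := by
  suffices B.compl₁₂ (complexStructureOfIsCompl h) (complexStructureOfIsCompl h) = B from
    LinearMap.congr_fun₂ this z z'
  refine ext_on_codisjoint h.codisjoint (fun z hz => ?_) (fun z hz => ?_) <;>
    refine ext_on_codisjoint h.codisjoint (fun z' hz' => ?_) (fun z' hz' => ?_)
  · simp [complexStructureOfIsCompl_apply_left h hz, complexStructureOfIsCompl_apply_left h hz',
      hp z hz z' hz']
  · simp [complexStructureOfIsCompl_apply_left h hz, complexStructureOfIsCompl_apply_right h hz',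
      ← mul_assoc]
  · simp [complexStructureOfIsCompl_apply_right h hz, complexStructureOfIsCompl_apply_left h hz',
      ← mul_assoc]
  · simp [complexStructureOfIsCompl_apply_right h hz, complexStructureOfIsCompl_apply_right h hz',
      hq z hz z' hz']

end LinearMap

namespace Complexification

variable {V V' : Type*} [AddCommGroup V] [Module ℝ V] [AddCommGroup V'] [Module ℝ V']

noncomputable def conj : (ℂ ⊗[ℝ] V) ≃ₛₗ[starRingEnd ℂ] (ℂ ⊗[ℝ] V) :=
  { TensorProduct.congr Complex.conjAe.toLinearEquiv (LinearEquiv.refl ℝ V) with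
    map_smul' := fun c z => by
      induction z using TensorProduct.induction_on with
      | zero => simp
      | tmul c' v => simp [smul_tmul']
      | add x y hx hy => simp_all [smul_add] }

@[simp] theorem conj_tmul (c : ℂ) (v : V) : conj (c ⊗ₜ[ℝ] v) = star c ⊗ₜ[ℝ] v := rfl

@[simp] theorem conj_conj (z : ℂ ⊗[ℝ] V) : conj (conj z) = z := by
  induction z using TensorProduct.induction_on with
  | zero => simp
  | tmul c v => simp
  | add x y hx hy => simp [hx, hy]

@[simp] theorem conj_symm : (conj : (ℂ ⊗[ℝ] V) ≃ₛₗ[starRingEnd ℂ] (ℂ ⊗[ℝ] V)).symm = conj :=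
  LinearEquiv.ext fun z => by rw [LinearEquiv.symm_apply_eq, conj_conj]

theorem conj_baseChange (f : V →ₗ[ℝ] V') (z : ℂ ⊗[ℝ] V) :
    conj (f.baseChange ℂ z) = f.baseChange ℂ (conj z) := by
  induction z using TensorProduct.induction_on with
  | zero => simp
  | tmul c v => simp
  | add x y hx hy => simp [hx, hy]

noncomputable def re : (ℂ ⊗[ℝ] V) →ₗ[ℝ] V :=
  TensorProduct.lift ((LinearMap.lsmul ℝ V).comp Complex.reLm)

@[simp] theorem re_tmul (c : ℂ) (v : V) : re (c ⊗ₜ[ℝ] v) = c.re • v := rfl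

theorem one_tmul_re (z : ℂ ⊗[ℝ] V) : (1 : ℂ) ⊗ₜ[ℝ] re z = (2 : ℂ)⁻¹ • (z + conj z) := by
  induction z using TensorProduct.induction_on with
  | zero => simp
  | tmul c v =>
    rw [re_tmul, conj_tmul, ← add_tmul, smul_tmul', tmul_smul, smul_tmul']
    congr 1
    apply Complex.ext <;> simp; ring
  | add x y hx hy => simp only [map_add, tmul_add, hx, hy]; module

theorem one_tmul_re_of_conj_eq {z : ℂ ⊗[ℝ] V} (hz : conj z = z) : (1 : ℂ) ⊗ₜ[ℝ] re z = z := by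
  rw [one_tmul_re, hz, ← two_smul ℂ z, smul_smul, inv_mul_cancel₀ two_ne_zero, one_smul]

theorem one_tmul_injective : Function.Injective fun v : V => (1 : ℂ) ⊗ₜ[ℝ] v :=
  Function.LeftInverse.injective (g := re) fun v => by simp

theorem baseChange_injective :
    Function.Injective (LinearMap.baseChange ℂ : (V →ₗ[ℝ] V') → _) := fun f g h =>
  LinearMap.ext fun v => one_tmul_injective <| by
    simpa using LinearMap.congr_fun h ((1 : ℂ) ⊗ₜ[ℝ] v)

theorem exists_baseChange_eq_of_conj_comm (J : (ℂ ⊗[ℝ] V) →ₗ[ℂ] (ℂ ⊗[ℝ] V'))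
    (hJ : ∀ z, conj (J z) = J (conj z)) : ∃ f : V →ₗ[ℝ] V', f.baseChange ℂ = J := by
  refine ⟨re ∘ₗ J.restrictScalars ℝ ∘ₗ TensorProduct.mk ℝ ℂ V 1, ?_⟩
  refine TensorProduct.AlgebraTensorModule.ext fun c v => ?_
  have hreal : conj (J ((1 : ℂ) ⊗ₜ[ℝ] v)) = J ((1 : ℂ) ⊗ₜ[ℝ] v) := by simp [hJ]
  have hc : ∀ w : V', c ⊗ₜ[ℝ] w = c • ((1 : ℂ) ⊗ₜ[ℝ] w) := fun w => by simp [smul_tmul']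
  simp [hc, one_tmul_re_of_conj_eq hreal, ← map_smul, smul_tmul']

theorem apply_conj_conj {b : V →ₗ[ℝ] V →ₗ[ℝ] ℝ} {B : (ℂ ⊗[ℝ] V) →ₗ[ℂ] (ℂ ⊗[ℝ] V) →ₗ[ℂ] ℂ}
    (hB : ∀ (c c' : ℂ) (v w : V), B (c ⊗ₜ[ℝ] v) (c' ⊗ₜ[ℝ] w) = c * c' * (b v w : ℂ))
    (z z' : ℂ ⊗[ℝ] V) : B (conj z) (conj z') = star (B z z') := by
  induction z using TensorProduct.induction_on with
  | zero => simp
  | add x y hx hy => simp only [map_add, LinearMap.add_apply, hx, hy, star_add]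
  | tmul c v =>
    induction z' using TensorProduct.induction_on with
    | zero => simp
    | add x y hx hy => simp only [map_add, hx, hy, star_add]
    | tmul c' w => simp [hB]

theorem baseChange_isometry {b : V →ₗ[ℝ] V →ₗ[ℝ] ℝ}
    {B : (ℂ ⊗[ℝ] V) →ₗ[ℂ] (ℂ ⊗[ℝ] V) →ₗ[ℂ] ℂ}
    (hB : ∀ (c c' : ℂ) (v w : V), B (c ⊗ₜ[ℝ] v) (c' ⊗ₜ[ℝ] w) = c * c' * (b v w : ℂ))
    {f : V →ₗ[ℝ] V} (hf : ∀ z z', B (f.baseChange ℂ z) (f.baseChange ℂ z') = B z z')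
    (v w : V) : b (f v) (f w) = b v w := by
  simpa [hB] using hf ((1 : ℂ) ⊗ₜ[ℝ] v) ((1 : ℂ) ⊗ₜ[ℝ] w)

noncomputable def conjSubmodule (W : Submodule ℂ (ℂ ⊗[ℝ] V)) : Submodule ℂ (ℂ ⊗[ℝ] V) :=
  W.map conj.toLinearMap

variable {W : Submodule ℂ (ℂ ⊗[ℝ] V)}

theorem mem_conjSubmodule {z : ℂ ⊗[ℝ] V} : z ∈ conjSubmodule W ↔ conj z ∈ W := by
  rw [conjSubmodule, Submodule.mem_map_equiv, conj_symm]

theorem finrank_conjSubmodule : finrank ℂ (conjSubmodule W) = finrank ℂ W :=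
  Submodule.finrank_map_semilinearEquiv conj W

theorem inf_conjSubmodule_eq_bot (hW : ∀ v : V, (1 : ℂ) ⊗ₜ[ℝ] v ∈ W → v = 0) :
    W ⊓ conjSubmodule W = ⊥ := by
  have real_eq_zero : ∀ z ∈ W, conj z = z → z = 0 := fun z hz hc => by
    rw [← one_tmul_re_of_conj_eq hc] at hz ⊢
    rw [hW _ hz, tmul_zero]
  refine (Submodule.eq_bot_iff _).mpr fun z hz => ?_
  obtain ⟨hz, hz'⟩ := Submodule.mem_inf.mp hz
  rw [mem_conjSubmodule] at hz'
  have hsum : z + conj z = 0 := real_eq_zero _ (W.add_mem hz hz') (by simp [add_comm])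
  have hdiff : Complex.I • (z - conj z) = 0 :=
    real_eq_zero _ (W.smul_mem _ (W.sub_mem hz hz')) (by simp [smul_sub, map_smulₛₗ]; abel)
  rw [smul_eq_zero, or_iff_right Complex.I_ne_zero] at hdiff
  linear_combination (norm := module) (2⁻¹ : ℂ) • (hsum + hdiff)

theorem isCompl_conjSubmodule [FiniteDimensional ℝ V] {n : ℕ} (hV : finrank ℝ V = 2 * n)
    (hW_dim : finrank ℂ W = n) (hW : ∀ v : V, (1 : ℂ) ⊗ₜ[ℝ] v ∈ W → v = 0) :
    IsCompl W (conjSubmodule W) := by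
  refine (Submodule.isCompl_iff_disjoint _ _ ?_).mpr
    (disjoint_iff.mpr (inf_conjSubmodule_eq_bot hW))
  rw [finrank_conjSubmodule, hW_dim, finrank_baseChange, hV, two_mul]

theorem isotropic_conjSubmodule {b : V →ₗ[ℝ] V →ₗ[ℝ] ℝ}
    {B : (ℂ ⊗[ℝ] V) →ₗ[ℂ] (ℂ ⊗[ℝ] V) →ₗ[ℂ] ℂ}
    (hB : ∀ (c c' : ℂ) (v w : V), B (c ⊗ₜ[ℝ] v) (c' ⊗ₜ[ℝ] w) = c * c' * (b v w : ℂ))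
    (hW : ∀ z ∈ W, ∀ z' ∈ W, B z z' = 0) :
    ∀ z ∈ conjSubmodule W, ∀ z' ∈ conjSubmodule W, B z z' = 0 := by
  intro z hz z' hz'
  rw [mem_conjSubmodule] at hz hz'
  simpa [apply_conj_conj hB] using hW _ hz _ hz'

variable (h : IsCompl W (conjSubmodule W))
include h

theorem conj_complexStructureOfIsCompl (z : ℂ ⊗[ℝ] V) :
    conj (LinearMap.complexStructureOfIsCompl h z) =
      LinearMap.complexStructureOfIsCompl h (conj z) := by
  set J := LinearMap.complexStructureOfIsCompl h
  suffices conj.toLinearMap ∘ₛₗ J = J ∘ₛₗ conj.toLinearMap from LinearMap.congr_fun this z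
  refine LinearMap.ext_on_codisjoint h.codisjoint (fun z hz => ?_) (fun z hz => ?_)
  · have hz' : conj z ∈ conjSubmodule W := mem_conjSubmodule.mpr (by simpa using hz)
    simp [J, LinearMap.complexStructureOfIsCompl_apply_left h hz,
      LinearMap.complexStructureOfIsCompl_apply_right h hz', map_smulₛₗ]
  · have hz' : conj z ∈ W := mem_conjSubmodule.mp hz
    simp [J, LinearMap.complexStructureOfIsCompl_apply_right h hz,
      LinearMap.complexStructureOfIsCompl_apply_left h hz', map_smulₛₗ]

theorem baseChange_eq_complexStructureOfIsCompl {f : V →ₗ[ℝ] V}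
    (hf : W = Module.End.eigenspace (f.baseChange ℂ) (-Complex.I)) :
    f.baseChange ℂ = LinearMap.complexStructureOfIsCompl h := by
  have hW : ∀ z ∈ W, f.baseChange ℂ z = -Complex.I • z := fun z hz =>
    Module.End.mem_eigenspace_iff.mp (hf ▸ hz)
  refine (LinearMap.complexStructureOfIsCompl_eq h hW fun z hz => ?_).symm
  rw [← conj_conj (f.baseChange ℂ z), conj_baseChange, hW _ (mem_conjSubmodule.mp hz)]
  simp [map_smulₛₗ]

end Complexification

open Complexification LinearMap in
theorem existsUnique_complex_structure_of_isotropic_general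
    (V : Type*) [AddCommGroup V] [Module ℝ V] [FiniteDimensional ℝ V]
    (n : ℕ) (hV : finrank ℝ V = 2 * n)
    (b : V →ₗ[ℝ] V →ₗ[ℝ] ℝ)
    (bC : (ℂ ⊗[ℝ] V) →ₗ[ℂ] (ℂ ⊗[ℝ] V) →ₗ[ℂ] ℂ)
    (hbC : ∀ (z z' : ℂ) (v w : V), bC (z ⊗ₜ[ℝ] v) (z' ⊗ₜ[ℝ] w) = z * z' * (b v w : ℂ))
    (W : Submodule ℂ (ℂ ⊗[ℝ] V))
    (hW_dim : finrank ℂ ↥W = n)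
    (hW_iso : ∀ z ∈ W, ∀ z' ∈ W, bC z z' = 0)
    (hW_real : ∀ v : V, (1 : ℂ) ⊗ₜ[ℝ] v ∈ W → v = 0) :
    ∃! I : V →ₗ[ℝ] V,
      I ∘ₗ I = -LinearMap.id ∧
      (∀ v w : V, b (I v) (I w) = b v w) ∧
      W = Module.End.eigenspace (LinearMap.baseChange ℂ I) (-Complex.I) := by
  have hcompl : IsCompl W (conjSubmodule W) := isCompl_conjSubmodule hV hW_dim hW_real
  obtain ⟨I, hIJ⟩ := exists_baseChange_eq_of_conj_comm _ (conj_complexStructureOfIsCompl hcompl)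
  refine ⟨I, ⟨baseChange_injective ?_, baseChange_isometry hbC ?_, ?_⟩, ?_⟩
  · rw [baseChange_comp, hIJ, complexStructureOfIsCompl_comp_self, baseChange_neg, baseChange_id]
  · rw [hIJ]
    exact complexStructureOfIsCompl_isometry hcompl bC hW_iso (isotropic_conjSubmodule hbC hW_iso)
  · rw [hIJ, eigenspace_complexStructureOfIsCompl]
  · rintro I' ⟨-, -, hI'⟩
    exact baseChange_injective <| by
      rw [hIJ, baseChange_eq_complexStructureOfIsCompl hcompl hI']

/-- Let `V` be a real vector space with `dim_ℝ V = 2n` and `b` a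
nondegenerate symmetric bilinear form on `V`, with `ℂ`-bilinear extension `bC` to the
complexification `ℂ ⊗_ℝ V`.  Let `W` be a complex subspace of `ℂ ⊗_ℝ V` with
`dim_ℂ W = n` that is totally isotropic for `bC` and contains no nonzero real vector.
Then there exists a unique complex structure `I` on `V` (`I ∘ I = −id`) that is an
isometry of `b` and satisfies `W = {z : I_ℂ z = −i·z}`. -/
theorem existsUnique_complex_structure_of_isotropic
    (V : Type*) [AddCommGroup V] [Module ℝ V] [FiniteDimensional ℝ V]
    (n : ℕ) (hV : finrank ℝ V = 2 * n)
    (b : V →ₗ[ℝ] V →ₗ[ℝ] ℝ)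
    (hb_symm : ∀ v w : V, b v w = b w v)
    (hb_nondeg : ∀ v : V, (∀ w : V, b v w = 0) → v = 0)
    (bC : (ℂ ⊗[ℝ] V) →ₗ[ℂ] (ℂ ⊗[ℝ] V) →ₗ[ℂ] ℂ)
    (hbC : ∀ (z z' : ℂ) (v w : V), bC (z ⊗ₜ[ℝ] v) (z' ⊗ₜ[ℝ] w) = z * z' * (b v w : ℂ))
    (W : Submodule ℂ (ℂ ⊗[ℝ] V))
    (hW_dim : finrank ℂ ↥W = n)
    (hW_iso : ∀ z ∈ W, ∀ z' ∈ W, bC z z' = 0)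
    (hW_real : ∀ v : V, (1 : ℂ) ⊗ₜ[ℝ] v ∈ W → v = 0) :
    ∃! I : V →ₗ[ℝ] V,
      I ∘ₗ I = -LinearMap.id ∧
      (∀ v w : V, b (I v) (I w) = b v w) ∧
      W = Module.End.eigenspace (LinearMap.baseChange ℂ I) (-Complex.I) :=
  existsUnique_complex_structure_of_isotropic_general V n hV b bC hbC W hW_dim hW_iso hW_real
end
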